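/- arXiv:2204.05722 — 6 statements merged into one kernel-verified Lean document; each statement's English description precedes it below -/
import Mathlib

section
/- Let f : [a,b] → [a,b] be a continuous l-modal map with positive shape. If f^n(x₀) is a local minimum of f^n and f^n(x₀) lies in an interval I_j with j even, then f^{n+1}(x₀) is a local maximum of f^{n+1}. -/
/-- The `j`-th maximal monotonicity interval of an `l`-modal map on `[a,b]` with
turning points `c 1 < ... < c l`: `I_1 = [a, c 1)`, `I_{l+1} = (c l, b]`, and
`I_j = (c (j-1), c j)` otherwise. -/
def modalInterval (a b : ℝ) (l : ℕ) (c : ℕ → ℝ) (j : ℕ) : Set ℝ :=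
  if j = 1 then Set.Ico a (c 1)
  else if j = l + 1 then Set.Ioc (c l) b
  else Set.Ioo (c (j - 1)) (c j)

/-- Theorem 1(b), second case: for a continuous `l`-modal map with positive shape,
if `f^n` has a local minimum at `x₀` and `f^n x₀` lies in an even-indexed
monotonicity interval, then `f^{n+1}` has a local maximum at `x₀`. -/
theorem minmax_transition_min_even (a b : ℝ) (l : ℕ) (c : ℕ → ℝ) (f : ℝ → ℝ)
    (hab : a < b) (hl : 1 ≤ l)
    (hc : ∀ i, 1 ≤ i → i < l → c i < c (i + 1)) (hca : a < c 1) (hcb : c l < b)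
    (hcont : ContinuousOn f (Set.Icc a b))
    (hmaps : Set.MapsTo f (Set.Icc a b) (Set.Icc a b))
    (hmono : ∀ j, 1 ≤ j → j ≤ l + 1 → Odd j → StrictMonoOn f (modalInterval a b l c j))
    (hanti : ∀ j, 1 ≤ j → j ≤ l + 1 → Even j → StrictAntiOn f (modalInterval a b l c j))
    (n : ℕ) (x₀ : ℝ) (hx₀ : x₀ ∈ Set.Icc a b) (j : ℕ) (hj1 : 1 ≤ j) (hj2 : j ≤ l + 1)
    (hjeven : Even j) (hmem : f^[n] x₀ ∈ modalInterval a b l c j)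
    (hmin : IsLocalMinOn (f^[n]) (Set.Icc a b) x₀) :
    IsLocalMaxOn (f^[n + 1]) (Set.Icc a b) x₀ := by
  have hjne1 : j ≠ 1 := by rintro rfl; exact (Nat.not_even_one hjeven)
  have hmapsn : Set.MapsTo (f^[n]) (Set.Icc a b) (Set.Icc a b) := hmaps.iterate n
  have hanti' := (hanti j hj1 hj2 hjeven).antitoneOn
  have hmin' : ∀ᶠ x in nhdsWithin x₀ (Set.Icc a b), f^[n] x₀ ≤ f^[n] x := hmin
  have hev : ∀ᶠ x in nhdsWithin x₀ (Set.Icc a b),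
      f^[n] x ∈ modalInterval a b l c j ∧ f^[n] x₀ ≤ f^[n] x := by
    by_cases hjl : j = l + 1
    · subst hjl
      have hI : modalInterval a b l c (l + 1) = Set.Ioc (c l) b := by
        unfold modalInterval; rw [if_neg hjne1, if_pos rfl]
      rw [hI] at hmem ⊢
      filter_upwards [hmin', self_mem_nhdsWithin] with x hx hxmem
      exact ⟨⟨lt_of_lt_of_le hmem.1 hx, (hmapsn hxmem).2⟩, hx⟩
    · have hI : modalInterval a b l c j = Set.Ioo (c (j - 1)) (c j) := by
        unfold modalInterval; rw [if_neg hjne1, if_neg hjl]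
      rw [hI] at hmem ⊢
      have hcontn : ContinuousOn (f^[n]) (Set.Icc a b) := hcont.iterate hmaps n
      have h1 : ∀ᶠ x in nhdsWithin x₀ (Set.Icc a b), f^[n] x < c j :=
        (hcontn x₀ hx₀).eventually (Filter.tendsto_id.eventually_lt_const hmem.2)
      filter_upwards [hmin', h1] with x hx hx2
      exact ⟨⟨lt_of_lt_of_le hmem.1 hx, hx2⟩, hx⟩
  filter_upwards [hev] with x hx
  simp only [Function.iterate_succ_apply']
  exact hanti' hmem hx.1 hx.2
end

section
/- Let f : [a,b] → [a,b] be a continuous l-modal map with positive shape. If f^n(x₀) is a local maximum of f^n and f^n(x₀) lies in an interval I_j with j even, then f^{n+1}(x₀) is a local minimum of f^{n+1}. -/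
/-- Theorem 1(c), second case: for a continuous `l`-modal map with positive shape,
if `f^n` has a local maximum at `x₀` and `f^n x₀` lies in an even-indexed
monotonicity interval, then `f^{n+1}` has a local minimum at `x₀`. -/
theorem minmax_transition_max_even (a b : ℝ) (l : ℕ) (c : ℕ → ℝ) (f : ℝ → ℝ)
    (hab : a < b) (hl : 1 ≤ l)
    (hc : ∀ i, 1 ≤ i → i < l → c i < c (i + 1)) (hca : a < c 1) (hcb : c l < b)
    (hcont : ContinuousOn f (Set.Icc a b))
    (hmaps : Set.MapsTo f (Set.Icc a b) (Set.Icc a b))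
    (hmono : ∀ j, 1 ≤ j → j ≤ l + 1 → Odd j → StrictMonoOn f (modalInterval a b l c j))
    (hanti : ∀ j, 1 ≤ j → j ≤ l + 1 → Even j → StrictAntiOn f (modalInterval a b l c j))
    (n : ℕ) (x₀ : ℝ) (hx₀ : x₀ ∈ Set.Icc a b) (j : ℕ) (hj1 : 1 ≤ j) (hj2 : j ≤ l + 1)
    (hjeven : Even j) (hmem : f^[n] x₀ ∈ modalInterval a b l c j)
    (hmax : IsLocalMaxOn (f^[n]) (Set.Icc a b) x₀) :
    IsLocalMinOn (f^[n + 1]) (Set.Icc a b) x₀ := by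
  have hanti' := (hanti j hj1 hj2 hjeven).antitoneOn
  obtain ⟨lo, hlo, hmemI⟩ : ∃ lo, lo < f^[n] x₀ ∧
      ∀ z, lo < z → z ≤ f^[n] x₀ → z ∈ modalInterval a b l c j := by
    have hj1' : j ≠ 1 := by rintro rfl; simp [Nat.even_iff] at hjeven
    unfold modalInterval at hmem ⊢
    rw [if_neg hj1'] at hmem
    by_cases h : j = l + 1
    · rw [if_pos h] at hmem
      exact ⟨c l, hmem.1, fun z hz1 hz2 => by
        rw [if_neg hj1', if_pos h]; exact ⟨hz1, hz2.trans hmem.2⟩⟩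
    · rw [if_neg h] at hmem
      exact ⟨c (j - 1), hmem.1, fun z hz1 hz2 => by
        rw [if_neg hj1', if_neg h]; exact ⟨hz1, lt_of_le_of_lt hz2 hmem.2⟩⟩
  have hg : ContinuousOn (f^[n]) (Set.Icc a b) := hcont.iterate hmaps n
  have hgc : ContinuousWithinAt (f^[n]) (Set.Icc a b) x₀ := hg x₀ hx₀
  have hev : ∀ᶠ y in nhdsWithin x₀ (Set.Icc a b), lo < f^[n] y :=
    hgc.eventually (eventually_gt_nhds hlo)
  filter_upwards [hmax, hev] with y hy1 hy2
  simp only [Function.iterate_succ_apply']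
  exact hanti' (hmemI _ hy2 hy1) hmem hy1
end

section
/- Let f be a continuous l-modal map of [a,b] into itself. For n ≥ 1, the lap number of f^n satisfies ℓ_n = ℓ_{n-1} + s_{n-1}, where s_ν = Σ_{i=1}^l s_ν^i and s_ν^i counts the interior simple zeros of f^ν(x) - c_i; consequently ℓ_n = 1 + Σ_{ν=0}^{n-1} s_ν. -/
/-- `m` is the lap number of `g` on `[a,b]`: the least number of pieces in a
partition `a = t 0 < t 1 < ... < t m = b` such that `g` is monotone on each piece. -/
def IsLapNumber (g : ℝ → ℝ) (a b : ℝ) (m : ℕ) : Prop :=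
  IsLeast {k : ℕ | ∃ t : ℕ → ℝ, t 0 = a ∧ t k = b ∧ (∀ i < k, t i < t (i + 1)) ∧
    ∀ i < k, MonotoneOn g (Set.Icc (t i) (t (i + 1))) ∨
      AntitoneOn g (Set.Icc (t i) (t (i + 1)))} m

/-- `g` crosses the level `y = c` transversally at `x`. -/
def CrossesAt (g : ℝ → ℝ) (c x : ℝ) : Prop :=
  g x = c ∧ ∃ ε > 0,
    ((∀ y ∈ Set.Ioo (x - ε) x, g y < c) ∧ (∀ y ∈ Set.Ioo x (x + ε), c < g y)) ∨
    ((∀ y ∈ Set.Ioo (x - ε) x, c < g y) ∧ (∀ y ∈ Set.Ioo x (x + ε), g y < c))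

/-- The set of interior simple zeros of `f^ν(x) - c`: points `x ∈ (a,b)` whose
orbit avoids `c` before time `ν` and such that `f^ν` crosses the level `c`
transversally at `x`. -/
def SimpleZeroSet (f : ℝ → ℝ) (a b c : ℝ) (ν : ℕ) : Set ℝ :=
  {x ∈ Set.Ioo a b | (∀ μ < ν, f^[μ] x ≠ c) ∧ CrossesAt (f^[ν]) c x}

/-!
Call a finite set `F ⊆ (a, b)` a turning set of `g` on `[a, b]` if `g` has a strict local
extremum at each point of `F` and is strictly monotone on every subinterval of `[a, b]` whose
interior misses `F`; the lap number of `g` is then `|F| + 1`.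

If `E` is a turning set of `f` and `F` one of a continuous self-map `g` of `[a, b]`, then
`F ∪ {x ∈ (a, b) | g x ∈ E}` is a turning set of `f ∘ g`: between consecutive points of this set
`g` is monotone with image avoiding `E` (intermediate value theorem), and at a new point `g` is
locally injective, so the strict extremum of `f` at `g x` pulls back. For an `l`-modal map the
turning points `c_i` form a turning set, hence the turning points of `f^n` are the points whose
orbit meets some `c_i` before time `n`. Those entering at time `ν` are the zeros of `f^ν - c_i`
that are not already turning points of `f^ν`, which are exactly the transversal ones; there are
`s_ν` of them.
-/

open Set Filter Topology

section Order

variable {α β : Type*} [LinearOrder α] [TopologicalSpace α] [OrderTopology α] [DenselyOrdered α]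
  [LinearOrder β] [TopologicalSpace β] [OrderClosedTopology β] {f : α → β} {u v : α}

theorem StrictMonoOn.Icc_of_Ioo (hf : StrictMonoOn f (Ioo u v))
    (hcont : ContinuousOn f (Icc u v)) : StrictMonoOn f (Icc u v) := by
  intro x hx y hy hxy
  obtain ⟨z, hxz, hzy⟩ := exists_between hxy
  obtain ⟨w, hzw, hwy⟩ := exists_between hzy
  have hz : z ∈ Ioo u v := ⟨hx.1.trans_lt hxz, (hzw.trans hwy).trans_le hy.2⟩
  have hw : w ∈ Ioo u v := ⟨hz.1.trans hzw, hwy.trans_le hy.2⟩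
  have hxz' : f x ≤ f z := by
    refine ContinuousWithinAt.closure_le (s := Ioo u z) ?_
      ((hcont x hx).mono (Ioo_subset_Icc_self.trans (Icc_subset_Icc_right hz.2.le)))
      continuousWithinAt_const fun t ht => (hf ⟨ht.1, ht.2.trans hz.2⟩ hz ht.2).le
    rw [closure_Ioo hz.1.ne]
    exact ⟨hx.1, hxz.le⟩
  have hwy' : f w ≤ f y := by
    refine ContinuousWithinAt.closure_le (s := Ioo w v) ?_ continuousWithinAt_const
      ((hcont y hy).mono (Ioo_subset_Icc_self.trans (Icc_subset_Icc_left hw.1.le)))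
      fun t ht => (hf hw ⟨hw.1.trans ht.1, ht.2⟩ ht.1).le
    rw [closure_Ioo hw.2.ne]
    exact ⟨hwy.le, hy.2⟩
  exact hxz'.trans_lt ((hf hz hw hzw).trans_le hwy')

theorem StrictAntiOn.Icc_of_Ioo (hf : StrictAntiOn f (Ioo u v))
    (hcont : ContinuousOn f (Icc u v)) : StrictAntiOn f (Icc u v) :=
  StrictMonoOn.Icc_of_Ioo (β := βᵒᵈ) hf hcont

end Order

section Partition

variable {α : Type*} [LinearOrder α]

theorem exists_mem_Ico_of_lt {t : ℕ → α} {k : ℕ} {x : α} (h0 : t 0 ≤ x) (hk : x < t k) :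
    ∃ i < k, x ∈ Ico (t i) (t (i + 1)) := by
  induction k with
  | zero => exact absurd hk h0.not_gt
  | succ k ih =>
    by_cases hxk : x < t k
    · obtain ⟨i, hi, hx⟩ := ih hxk
      exact ⟨i, by omega, hx⟩
    · exact ⟨k, k.lt_succ_self, not_lt.1 hxk, hk⟩

theorem exists_partition_avoiding {a b : α} (F : Finset α)
    (hab : a < b) (hF : ∀ x ∈ F, x ∈ Ioo a b) :
    ∃ t : ℕ → α, t 0 = a ∧ t (F.card + 1) = b ∧ (∀ i < F.card + 1, t i < t (i + 1)) ∧
      ∀ i < F.card + 1, ∀ x ∈ F, x ∉ Ioo (t i) (t (i + 1)) := by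
  classical
  induction F using Finset.induction_on_max generalizing b with
  | empty => exact ⟨fun i => if i = 0 then a else b, by simp, by simp, by simp [hab], by simp⟩
  | insert M F hlt ih =>
    have hM : M ∉ F := fun h => (hlt M h).false
    obtain ⟨t, ht0, htk, hstep, havoid⟩ := ih (hF M (Finset.mem_insert_self ..)).1
      fun x hx => ⟨(hF x (Finset.mem_insert_of_mem hx)).1, hlt x hx⟩
    have htM : ∀ i ≤ F.card + 1, t i ≤ M := fun i hi =>
      ((strictMonoOn_Iic_of_lt_succ hstep).monotoneOn hi (mem_Iic.2 le_rfl) hi).trans_eq htk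
    have hupd : ∀ i ≤ F.card + 1, Function.update t (F.card + 1 + 1) b i = t i :=
      fun i hi => Function.update_of_ne (by omega) _ _
    rw [Finset.card_insert_of_notMem hM]
    refine ⟨Function.update t (F.card + 1 + 1) b, by rw [hupd 0 (by omega), ht0],
      Function.update_self .., fun i hi => ?_, fun i hi x hx => ?_⟩
    · rcases Nat.lt_succ_iff_lt_or_eq.1 hi with hi | rfl
      · rw [hupd i hi.le, hupd (i + 1) hi]
        exact hstep i hi
      · rw [hupd _ le_rfl, htk, Function.update_self]
        exact (hF M (Finset.mem_insert_self ..)).2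
    · rcases Nat.lt_succ_iff_lt_or_eq.1 hi with hi | rfl
      · rw [hupd i hi.le, hupd (i + 1) hi]
        rcases Finset.mem_insert.1 hx with rfl | hx
        exacts [fun h => (htM (i + 1) hi).not_gt h.2, havoid i hi x hx]
      · rw [hupd _ le_rfl, htk, Function.update_self]
        rcases Finset.mem_insert.1 hx with rfl | hx
        exacts [fun h => h.1.false, fun h => (hlt x hx).not_gt h.1]

theorem strictMonoOn_or_strictAntiOn_of_pieces {β : Type*} [Preorder β]
    {g : α → β} {d : ℕ → α} {m : ℕ}
    (hpiece : ∀ j, 1 ≤ j → j ≤ m →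
      StrictMonoOn g (Icc (d (j - 1)) (d j)) ∨ StrictAntiOn g (Icc (d (j - 1)) (d j)))
    {p q : α} (hp : d 0 ≤ p) (hq : q ≤ d m) (hfree : ∀ i, 0 < i → i < m → d i ∉ Ioo p q) :
    StrictMonoOn g (Icc p q) ∨ StrictAntiOn g (Icc p q) := by
  rcases le_or_gt q p with hqp | hpq
  · exact .inl ((subsingleton_Icc_of_ge hqp).strictMonoOn _)
  obtain ⟨i, him, hpi, hpi'⟩ := exists_mem_Ico_of_lt hp (hpq.trans_le hq)
  have hqi : q ≤ d (i + 1) := by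
    rcases (Nat.succ_le_of_lt him).eq_or_lt with h | h
    · rw [show i + 1 = m from h]
      exact hq
    · by_contra! h'
      exact hfree (i + 1) i.succ_pos h ⟨hpi', h'⟩
  have hsub := Icc_subset_Icc hpi hqi
  simpa using (hpiece (i + 1) (by omega) him).imp (·.mono hsub) (·.mono hsub)

end Partition

def IsStrictLocalExtr {α β : Type*} [TopologicalSpace α] [Preorder β] (g : α → β) (x : α) :
    Prop :=
  (∀ᶠ y in 𝓝[≠] x, g y < g x) ∨ ∀ᶠ y in 𝓝[≠] x, g x < g y

section StrictLocalExtr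

variable {α β : Type*} [LinearOrder α] [TopologicalSpace α] [OrderTopology α] [LinearOrder β]
  {g : α → β} {x p q : α}

theorem isStrictLocalExtr_of_Icc (hpx : p < x) (hxq : x < q)
    (h : StrictMonoOn g (Icc p x) ∧ StrictAntiOn g (Icc x q) ∨
      StrictAntiOn g (Icc p x) ∧ StrictMonoOn g (Icc x q)) :
    IsStrictLocalExtr g x := by
  have hnear : ∀ᶠ y in 𝓝[≠] x, y ∈ Ioo p q ∧ y ≠ x :=
    sdiff_mem_nhdsWithin_compl (Ioo_mem_nhds hpx hxq) {x}
  have hxl : x ∈ Icc p x := ⟨hpx.le, le_rfl⟩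
  have hxr : x ∈ Icc x q := ⟨le_rfl, hxq.le⟩
  rcases h with ⟨hl, hr⟩ | ⟨hl, hr⟩
  · refine .inl (hnear.mono fun y ⟨hy, hyx⟩ => ?_)
    rcases hyx.lt_or_gt with hyx | hyx
    exacts [hl ⟨hy.1.le, hyx.le⟩ hxl hyx, hr hxr ⟨hyx.le, hy.2.le⟩ hyx]
  · refine .inr (hnear.mono fun y ⟨hy, hyx⟩ => ?_)
    rcases hyx.lt_or_gt with hyx | hyx
    exacts [hl ⟨hy.1.le, hyx.le⟩ hxl hyx, hr hxr ⟨hyx.le, hy.2.le⟩ hyx]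

theorem IsStrictLocalExtr.not_monotoneOn [DenselyOrdered α] [NoMinOrder α] [NoMaxOrder α]
    (hg : IsStrictLocalExtr g x) (hx : x ∈ Ioo p q) :
    ¬(MonotoneOn g (Icc p q) ∨ AntitoneOn g (Icc p q)) := by
  have hxI : x ∈ Icc p q := Ioo_subset_Icc_self hx
  have hl : ∀ᶠ y in 𝓝[<] x, y ∈ Ioo p x := Ioo_mem_nhdsLT hx.1
  have hr : ∀ᶠ y in 𝓝[>] x, y ∈ Ioo x q := Ioo_mem_nhdsGT hx.2
  rintro (hm | hm) <;> rcases hg with hg | hg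
  · obtain ⟨y, hy, hgy⟩ := (hr.and (hg.filter_mono (nhdsGT_le_nhdsNE x))).exists
    exact (hm hxI ⟨hx.1.le.trans hy.1.le, hy.2.le⟩ hy.1.le).not_gt hgy
  · obtain ⟨y, hy, hgy⟩ := (hl.and (hg.filter_mono (nhdsLT_le_nhdsNE x))).exists
    exact (hm ⟨hy.1.le, hy.2.le.trans hx.2.le⟩ hxI hy.2.le).not_gt hgy
  · obtain ⟨y, hy, hgy⟩ := (hl.and (hg.filter_mono (nhdsLT_le_nhdsNE x))).exists
    exact (hm ⟨hy.1.le, hy.2.le.trans hx.2.le⟩ hxI hy.2.le).not_gt hgy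
  · obtain ⟨y, hy, hgy⟩ := (hr.and (hg.filter_mono (nhdsGT_le_nhdsNE x))).exists
    exact (hm hxI ⟨hx.1.le.trans hy.1.le, hy.2.le⟩ hy.1.le).not_gt hgy

end StrictLocalExtr

theorem IsStrictLocalExtr.comp_of_eventually_ne {α β γ : Type*} [TopologicalSpace α]
    [TopologicalSpace β] [Preorder γ] {f : β → γ} {g : α → β} {x : α}
    (hf : IsStrictLocalExtr f (g x)) (hg : ContinuousAt g x)
    (hne : ∀ᶠ y in 𝓝[≠] x, g y ≠ g x) : IsStrictLocalExtr (f ∘ g) x := by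
  have hlim : Tendsto g (𝓝[≠] x) (𝓝[≠] (g x)) :=
    tendsto_nhdsWithin_of_tendsto_nhds_of_eventually_within _
      (hg.tendsto.mono_left nhdsWithin_le_nhds) hne
  exact hf.imp (hlim.eventually ·) (hlim.eventually ·)

theorem IsStrictLocalExtr.comp_strictMonoOn {α β γ : Type*} [TopologicalSpace α]
    [TopologicalSpace β] [Preorder β] [Preorder γ] {f : β → γ} {g : α → β} {x : α}
    {s t : Set β} (hg : IsStrictLocalExtr g x) (hgc : ContinuousAt g x)
    (ht : ∀ᶠ y in 𝓝 x, g y ∈ t) (hs : s ∈ 𝓝[t] g x) (hf : StrictMonoOn f s ∨ StrictAntiOn f s) :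
    IsStrictLocalExtr (f ∘ g) x := by
  have hgs : ∀ᶠ y in 𝓝[≠] x, g y ∈ s :=
    nhdsWithin_le_nhds (tendsto_nhdsWithin_iff.2 ⟨hgc, ht⟩ hs)
  have hxs : g x ∈ s := mem_of_mem_nhdsWithin ht.self_of_nhds hs
  rcases hg with hg | hg <;> rcases hf with hf | hf
  · exact .inl <| (hg.and hgs).mono fun y hy => hf hy.2 hxs hy.1
  · exact .inr <| (hg.and hgs).mono fun y hy => hf hy.2 hxs hy.1
  · exact .inr <| (hg.and hgs).mono fun y hy => hf hxs hy.2 hy.1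
  · exact .inl <| (hg.and hgs).mono fun y hy => hf hxs hy.2 hy.1

section Crossing

variable {g : ℝ → ℝ} {x γ : ℝ}

theorem IsStrictLocalExtr.not_crossesAt (hg : IsStrictLocalExtr g x) : ¬CrossesAt g γ x := by
  rintro ⟨rfl, ε, hε, hcross⟩
  have hl : ∀ᶠ y in 𝓝[<] x, y ∈ Ioo (x - ε) x := Ioo_mem_nhdsLT (by linarith)
  have hr : ∀ᶠ y in 𝓝[>] x, y ∈ Ioo x (x + ε) := Ioo_mem_nhdsGT (by linarith)
  rcases hg with hg | hg <;> rcases hcross with ⟨hcl, hcr⟩ | ⟨hcl, hcr⟩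
  · obtain ⟨y, hy, hgy⟩ := (hr.and (hg.filter_mono (nhdsGT_le_nhdsNE x))).exists
    exact (hcr y hy).not_gt hgy
  · obtain ⟨y, hy, hgy⟩ := (hl.and (hg.filter_mono (nhdsLT_le_nhdsNE x))).exists
    exact (hcl y hy).not_gt hgy
  · obtain ⟨y, hy, hgy⟩ := (hl.and (hg.filter_mono (nhdsLT_le_nhdsNE x))).exists
    exact (hcl y hy).not_gt hgy
  · obtain ⟨y, hy, hgy⟩ := (hr.and (hg.filter_mono (nhdsGT_le_nhdsNE x))).exists
    exact (hcr y hy).not_gt hgy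

theorem crossesAt_of_mem_nhds {s : Set ℝ} (hs : s ∈ 𝓝 x)
    (hg : StrictMonoOn g s ∨ StrictAntiOn g s) : CrossesAt g (g x) x := by
  obtain ⟨ε, hε, hball⟩ := Metric.mem_nhds_iff.1 hs
  rw [Real.ball_eq_Ioo] at hball
  have hxs : x ∈ s := mem_of_mem_nhds hs
  have hl : ∀ y ∈ Ioo (x - ε) x, y ∈ s := fun y hy => hball ⟨hy.1, by linarith [hy.2]⟩
  have hr : ∀ y ∈ Ioo x (x + ε), y ∈ s := fun y hy => hball ⟨by linarith [hy.1], hy.2⟩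
  refine ⟨rfl, ε, hε, hg.imp (fun hm => ⟨?_, ?_⟩) (fun hm => ⟨?_, ?_⟩)⟩
  · exact fun y hy => hm (hl y hy) hxs hy.2
  · exact fun y hy => hm hxs (hr y hy) hy.1
  · exact fun y hy => hm (hl y hy) hxs hy.2
  · exact fun y hy => hm hxs (hr y hy) hy.1

end Crossing

structure IsTurningSet (g : ℝ → ℝ) (a b : ℝ) (F : Set ℝ) : Prop where
  subset_Ioo : F ⊆ Ioo a b
  finite : F.Finite
  isStrictLocalExtr : ∀ x ∈ F, IsStrictLocalExtr g x
  strictMonoOn_or_strictAntiOn : ∀ ⦃p q⦄, a ≤ p → q ≤ b → Disjoint F (Ioo p q) →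
    StrictMonoOn g (Icc p q) ∨ StrictAntiOn g (Icc p q)

namespace IsTurningSet

variable {f g : ℝ → ℝ} {a b x : ℝ} {E F : Set ℝ}

theorem exists_partition (hg : IsTurningSet g a b F) (hab : a < b) :
    ∃ t : ℕ → ℝ, t 0 = a ∧ t (F.ncard + 1) = b ∧ (∀ i < F.ncard + 1, t i < t (i + 1)) ∧
      ∀ i < F.ncard + 1,
        StrictMonoOn g (Icc (t i) (t (i + 1))) ∨ StrictAntiOn g (Icc (t i) (t (i + 1))) := by
  obtain ⟨t, ht0, htk, hstep, havoid⟩ :=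
    exists_partition_avoiding hg.finite.toFinset hab fun x hx => hg.subset_Ioo (by simpa using hx)
  rw [← Set.ncard_eq_toFinset_card F hg.finite] at htk hstep havoid
  have htm := (strictMonoOn_Iic_of_lt_succ hstep).monotoneOn
  refine ⟨t, ht0, htk, hstep, fun i hi => hg.strictMonoOn_or_strictAntiOn ?_ ?_ ?_⟩
  · exact ht0 ▸ htm (mem_Iic.2 (Nat.zero_le _)) (mem_Iic.2 hi.le) (Nat.zero_le _)
  · exact htk ▸ htm (mem_Iic.2 hi) (mem_Iic.2 le_rfl) hi
  · exact Set.disjoint_left.2 fun x hx => havoid i hi x (hg.finite.mem_toFinset.2 hx)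

theorem isLapNumber (hg : IsTurningSet g a b F) (hab : a < b) :
    IsLapNumber g a b (F.ncard + 1) := by
  refine ⟨?_, ?_⟩
  · obtain ⟨t, ht0, htk, hstep, hmono⟩ := hg.exists_partition hab
    exact ⟨t, ht0, htk, hstep,
      fun i hi => (hmono i hi).imp StrictMonoOn.monotoneOn StrictAntiOn.antitoneOn⟩
  · rintro k ⟨t, ht0, htk, -, hmono⟩
    have hk : k ≠ 0 := by
      rintro rfl
      exact hab.ne (ht0.symm.trans htk)
    have hsub : F ⊆ (Finset.Icc 1 (k - 1)).image t := by
      intro x hxF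
      have hx := hg.subset_Ioo hxF
      obtain ⟨i, hik, hti, hxt⟩ := exists_mem_Ico_of_lt (ht0 ▸ hx.1.le) (htk ▸ hx.2)
      have heq : t i = x := hti.eq_or_lt.resolve_right fun h =>
        (hg.isStrictLocalExtr x hxF).not_monotoneOn ⟨h, hxt⟩ (hmono i hik)
      have hi0 : i ≠ 0 := by
        rintro rfl
        exact hx.1.ne (ht0 ▸ heq)
      exact Finset.mem_coe.2 (Finset.mem_image.2 ⟨i, Finset.mem_Icc.2 ⟨by omega, by omega⟩, heq⟩)
    have hcard := ((Set.ncard_le_ncard hsub (Finset.finite_toSet _)).trans_eq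
      (Set.ncard_coe_finset _)).trans Finset.card_image_le
    rw [Nat.card_Icc] at hcard
    omega

theorem finite_preimage (hg : IsTurningSet g a b F) (hab : a < b) (hE : E.Finite) :
    {x ∈ Ioo a b | g x ∈ E}.Finite := by
  obtain ⟨t, ht0, htk, -, hmono⟩ := hg.exists_partition hab
  have hcover : {x ∈ Ioo a b | g x ∈ E} ⊆
      ⋃ i ∈ Iio (F.ncard + 1), Icc (t i) (t (i + 1)) ∩ g ⁻¹' E := by
    rintro x ⟨hx, hxE⟩
    obtain ⟨i, hi, hxi⟩ := exists_mem_Ico_of_lt (ht0 ▸ hx.1.le) (htk ▸ hx.2)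
    exact mem_biUnion hi ⟨Ico_subset_Icc_self hxi, hxE⟩
  refine ((finite_Iio _).biUnion fun i hi => ?_).subset hcover
  have hinj : InjOn g (Icc (t i) (t (i + 1))) :=
    (hmono i hi).elim StrictMonoOn.injOn StrictAntiOn.injOn
  exact (hE.subset (image_subset_iff.2 inter_subset_right)).of_finite_image
    (hinj.mono inter_subset_left)

theorem exists_mem_nhdsWithin_strictMonoOn (hg : IsTurningSet g a b F) {v : ℝ} (hvF : v ∉ F) :
    ∃ s ∈ 𝓝[Icc a b] v, StrictMonoOn g s ∨ StrictAntiOn g s := by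
  obtain ⟨p, q, hv, hpq⟩ :=
    mem_nhds_iff_exists_Ioo_subset.1 (hg.finite.isClosed.isOpen_compl.mem_nhds hvF)
  refine ⟨Icc (max p a) (min q b),
    mem_of_superset (inter_mem_nhdsWithin _ (Ioo_mem_nhds hv.1 hv.2)) ?_,
    hg.strictMonoOn_or_strictAntiOn (le_max_right _ _) (min_le_right _ _) ?_⟩
  · rintro y ⟨⟨hya, hyb⟩, hyp, hyq⟩
    exact ⟨max_le hyp.le hya, le_min hyq.le hyb⟩
  · exact subset_compl_iff_disjoint_left.1
      ((Ioo_subset_Ioo (le_max_left _ _) (min_le_left _ _)).trans hpq)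

theorem exists_mem_nhds_strictMonoOn (hg : IsTurningSet g a b F) (hx : x ∈ Ioo a b)
    (hxF : x ∉ F) : ∃ s ∈ 𝓝 x, StrictMonoOn g s ∨ StrictAntiOn g s := by
  rw [← nhdsWithin_eq_nhds.2 (Icc_mem_nhds hx.1 hx.2)]
  exact hg.exists_mem_nhdsWithin_strictMonoOn hxF

theorem eventually_ne (hg : IsTurningSet g a b F) (hx : x ∈ Ioo a b) :
    ∀ᶠ y in 𝓝[≠] x, g y ≠ g x := by
  by_cases hxF : x ∈ F
  · rcases hg.isStrictLocalExtr x hxF with h | h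
    exacts [h.mono fun y hy => hy.ne, h.mono fun y hy => hy.ne']
  · obtain ⟨s, hs, hmono⟩ := hg.exists_mem_nhds_strictMonoOn hx hxF
    have hinj : InjOn g s := hmono.elim StrictMonoOn.injOn StrictAntiOn.injOn
    filter_upwards [nhdsWithin_le_nhds hs, self_mem_nhdsWithin] with y hy hyx
    exact fun h => hyx (hinj hy (mem_of_mem_nhds hs) h)

theorem crossesAt_iff (hg : IsTurningSet g a b F) (hx : x ∈ Ioo a b) :
    CrossesAt g (g x) x ↔ x ∉ F :=
  ⟨fun h hxF => (hg.isStrictLocalExtr x hxF).not_crossesAt h, fun hxF =>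
    let ⟨_, hs, hmono⟩ := hg.exists_mem_nhds_strictMonoOn hx hxF
    crossesAt_of_mem_nhds hs hmono⟩

theorem isStrictLocalExtr_comp (hg : IsTurningSet g a b F) (hgc : ContinuousOn g (Icc a b))
    (hgm : MapsTo g (Icc a b) (Icc a b)) (hf : IsTurningSet f a b E)
    (hx : x ∈ F ∪ {x ∈ Ioo a b | g x ∈ E}) : IsStrictLocalExtr (f ∘ g) x := by
  have hxab : x ∈ Ioo a b := hx.elim (hg.subset_Ioo ·) (·.1)
  have hIcc : Icc a b ∈ 𝓝 x := Icc_mem_nhds hxab.1 hxab.2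
  have hgx : ContinuousAt g x := hgc.continuousAt hIcc
  by_cases hE : g x ∈ E
  · exact (hf.isStrictLocalExtr _ hE).comp_of_eventually_ne hgx (hg.eventually_ne hxab)
  · have hxF : x ∈ F := hx.resolve_right fun h => hE h.2
    obtain ⟨s, hs, hmono⟩ := hf.exists_mem_nhdsWithin_strictMonoOn hE
    exact (hg.isStrictLocalExtr x hxF).comp_strictMonoOn hgx
      (eventually_of_mem hIcc fun _ hy => hgm hy) hs hmono

theorem strictMonoOn_or_strictAntiOn_comp (hg : IsTurningSet g a b F)
    (hgc : ContinuousOn g (Icc a b)) (hgm : MapsTo g (Icc a b) (Icc a b))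
    (hf : IsTurningSet f a b E) {p q : ℝ} (hp : a ≤ p) (hq : q ≤ b)
    (hpq : Disjoint (F ∪ {x ∈ Ioo a b | g x ∈ E}) (Ioo p q)) :
    StrictMonoOn (f ∘ g) (Icc p q) ∨ StrictAntiOn (f ∘ g) (Icc p q) := by
  rcases le_or_gt q p with hqp | hpq'
  · exact .inl ((subsingleton_Icc_of_ge hqp).strictMonoOn _)
  have hsub : Icc p q ⊆ Icc a b := Icc_subset_Icc hp hq
  have hc : ContinuousOn g (Icc p q) := hgc.mono hsub
  have hpI : p ∈ Icc p q := left_mem_Icc.2 hpq'.le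
  have hqI : q ∈ Icc p q := right_mem_Icc.2 hpq'.le
  have hfree : ∀ y ∈ Ioo p q, g y ∉ E := fun y hy hyE =>
    Set.disjoint_left.1 hpq (Or.inr ⟨⟨hp.trans_lt hy.1, hy.2.trans_le hq⟩, hyE⟩) hy
  rcases hg.strictMonoOn_or_strictAntiOn hp hq (hpq.mono_left subset_union_left) with hm | hm
  · have hE : Disjoint E (Ioo (g p) (g q)) := Set.disjoint_left.2 fun v hv hv' => by
      obtain ⟨y, hy, rfl⟩ := intermediate_value_Ioo hpq'.le hc hv'
      exact hfree y hy hv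
    have hmaps : MapsTo g (Icc p q) (Icc (g p) (g q)) := fun y hy =>
      ⟨hm.monotoneOn hpI hy hy.1, hm.monotoneOn hy hqI hy.2⟩
    exact (hf.strictMonoOn_or_strictAntiOn (hgm (hsub hpI)).1 (hgm (hsub hqI)).2 hE).imp
      (·.comp hm hmaps) (·.comp_strictMonoOn hm hmaps)
  · have hE : Disjoint E (Ioo (g q) (g p)) := Set.disjoint_left.2 fun v hv hv' => by
      obtain ⟨y, hy, rfl⟩ := intermediate_value_Ioo' hpq'.le hc hv'
      exact hfree y hy hv
    have hmaps : MapsTo g (Icc p q) (Icc (g q) (g p)) := fun y hy =>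
      ⟨hm.antitoneOn hy hqI hy.2, hm.antitoneOn hpI hy hy.1⟩
    exact (hf.strictMonoOn_or_strictAntiOn (hgm (hsub hqI)).1 (hgm (hsub hpI)).2 hE).symm.imp
      (·.comp hm hmaps) (·.comp_strictAntiOn hm hmaps)

theorem comp (hg : IsTurningSet g a b F) (hgc : ContinuousOn g (Icc a b))
    (hgm : MapsTo g (Icc a b) (Icc a b)) (hf : IsTurningSet f a b E) (hab : a < b) :
    IsTurningSet (f ∘ g) a b (F ∪ {x ∈ Ioo a b | g x ∈ E}) where
  subset_Ioo := union_subset hg.subset_Ioo (sep_subset _ _)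
  finite := hg.finite.union (hg.finite_preimage hab hf.finite)
  isStrictLocalExtr _ hx := hg.isStrictLocalExtr_comp hgc hgm hf hx
  strictMonoOn_or_strictAntiOn _ _ hp hq hpq :=
    hg.strictMonoOn_or_strictAntiOn_comp hgc hgm hf hp hq hpq

end IsTurningSet

def iterateTurningSet (f : ℝ → ℝ) (a b : ℝ) (E : Set ℝ) (n : ℕ) : Set ℝ :=
  {x ∈ Ioo a b | ∃ μ < n, f^[μ] x ∈ E}

section Iterate

variable {f : ℝ → ℝ} {a b : ℝ} {E : Set ℝ}

theorem iterateTurningSet_zero : iterateTurningSet f a b E 0 = ∅ := by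
  simp [iterateTurningSet]

theorem iterateTurningSet_succ (n : ℕ) :
    iterateTurningSet f a b E (n + 1) =
      iterateTurningSet f a b E n ∪ {x ∈ Ioo a b | f^[n] x ∈ E} := by
  ext x
  simp only [iterateTurningSet, mem_union, mem_ofPred_eq, Nat.lt_succ_iff_lt_or_eq, or_and_right,
    exists_or, exists_eq_left, and_or_left]

theorem IsTurningSet.iterate (hf : IsTurningSet f a b E) (hfc : ContinuousOn f (Icc a b))
    (hfm : MapsTo f (Icc a b) (Icc a b)) (hab : a < b) :
    ∀ n, IsTurningSet (f^[n]) a b (iterateTurningSet f a b E n)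
  | 0 => iterateTurningSet_zero (f := f) ▸
      ⟨empty_subset _, finite_empty, fun _ h => h.elim, fun _ _ _ _ _ => .inl strictMonoOn_id⟩
  | n + 1 => by
    rw [Function.iterate_succ', iterateTurningSet_succ]
    exact (hf.iterate hfc hfm hab n).comp (hfc.iterate hfm n) (hfm.iterate n) hf hab

theorem simpleZeroSet_eq_diff {n : ℕ} {γ : ℝ}
    (hT : IsTurningSet (f^[n]) a b (iterateTurningSet f a b E n)) (hγ : γ ∈ E) :
    SimpleZeroSet f a b γ n = {x ∈ Ioo a b | f^[n] x = γ} \ iterateTurningSet f a b E n := by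
  ext x
  constructor
  · rintro ⟨hx, -, hcross⟩
    exact ⟨⟨hx, hcross.1⟩, (hT.crossesAt_iff hx).1 (by rwa [hcross.1])⟩
  · rintro ⟨⟨hx, hfx⟩, hxT⟩
    exact ⟨hx, fun μ hμ h => hxT ⟨hx, μ, hμ, h ▸ hγ⟩, hfx ▸ (hT.crossesAt_iff hx).2 hxT⟩

variable {ι : Type*} {I : Finset ι} {c : ι → ℝ} {n : ℕ}

theorem iterateTurningSet_succ_eq_union
    (hT : IsTurningSet (f^[n]) a b (iterateTurningSet f a b (c '' I) n)) :
    iterateTurningSet f a b (c '' I) (n + 1) =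
      iterateTurningSet f a b (c '' I) n ∪ ⋃ i ∈ (I : Set ι), SimpleZeroSet f a b (c i) n := by
  rw [iterateTurningSet_succ]
  ext x
  simp only [mem_union, mem_iUnion, exists_prop]
  constructor
  · rintro (hx | ⟨hx, i, hi, hfx⟩)
    · exact .inl hx
    · by_cases hxT : x ∈ iterateTurningSet f a b (c '' I) n
      · exact .inl hxT
      · refine .inr ⟨i, hi, ?_⟩
        rw [simpleZeroSet_eq_diff hT (mem_image_of_mem c hi)]
        exact ⟨⟨hx, hfx.symm⟩, hxT⟩
  · rintro (hx | ⟨i, hi, hxS⟩)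
    · exact .inl hx
    · exact .inr ⟨hxS.1, i, hi, hxS.2.2.1.symm⟩

theorem ncard_iterateTurningSet_succ (hc : InjOn c I)
    (hT : ∀ n, IsTurningSet (f^[n]) a b (iterateTurningSet f a b (c '' I) n)) :
    (iterateTurningSet f a b (c '' I) (n + 1)).ncard =
      (iterateTurningSet f a b (c '' I) n).ncard +
        ∑ i ∈ I, (SimpleZeroSet f a b (c i) n).ncard := by
  have hsplit := iterateTurningSet_succ_eq_union (hT n)
  have hfin : ∀ i ∈ (I : Set ι), (SimpleZeroSet f a b (c i) n).Finite := fun i hi =>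
    (hT (n + 1)).finite.subset (hsplit ▸ subset_union_of_subset_right (subset_biUnion_of_mem
      (u := fun i => SimpleZeroSet f a b (c i) n) hi) _)
  have hdisj : Disjoint (iterateTurningSet f a b (c '' I) n)
      (⋃ i ∈ (I : Set ι), SimpleZeroSet f a b (c i) n) := by
    simp only [disjoint_iUnion_right]
    intro i hi
    rw [simpleZeroSet_eq_diff (hT n) (mem_image_of_mem c hi)]
    exact disjoint_sdiff_right
  have hpair : (I : Set ι).PairwiseDisjoint fun i => SimpleZeroSet f a b (c i) n :=
    fun i hi j hj hij => Set.disjoint_left.2 fun x hxi hxj =>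
      hij (hc hi hj (hxi.2.2.1.symm.trans hxj.2.2.1))
  rw [hsplit, ncard_union_eq hdisj (hT n).finite ((Finset.finite_toSet I).biUnion hfin),
    (Finset.finite_toSet I).ncard_biUnion hfin hpair, finsum_mem_coe_finset]

end Iterate

structure IsModalMap (f : ℝ → ℝ) (a b : ℝ) (l : ℕ) (c : ℕ → ℝ) : Prop where
  one_le : 1 ≤ l
  turningPoint_lt : ∀ i, 1 ≤ i → i < l → c i < c (i + 1)
  left_lt : a < c 1
  lt_right : c l < b
  continuousOn : ContinuousOn f (Icc a b)
  strictMonoOn_odd : ∀ j, 1 ≤ j → j ≤ l + 1 → Odd j → StrictMonoOn f (modalInterval a b l c j)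
  strictAntiOn_even : ∀ j, 1 ≤ j → j ≤ l + 1 → Even j → StrictAntiOn f (modalInterval a b l c j)

def modalKnot (a b : ℝ) (l : ℕ) (c : ℕ → ℝ) (i : ℕ) : ℝ :=
  if i = 0 then a else if i = l + 1 then b else c i

section Modal

variable {f : ℝ → ℝ} {a b : ℝ} {l : ℕ} {c : ℕ → ℝ} {i j : ℕ}

theorem modalKnot_zero : modalKnot a b l c 0 = a := if_pos rfl

theorem modalKnot_succ_self : modalKnot a b l c (l + 1) = b := by simp [modalKnot]

theorem modalKnot_of_mem (hi : i ∈ Icc 1 l) : modalKnot a b l c i = c i := by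
  rw [modalKnot, if_neg (by grind), if_neg (by grind)]

theorem Ioo_modalKnot_subset_modalInterval (hl : 1 ≤ l) (hj : j ∈ Icc 1 (l + 1)) :
    Ioo (modalKnot a b l c (j - 1)) (modalKnot a b l c j) ⊆ modalInterval a b l c j := by
  obtain ⟨hj1, hj2⟩ := hj
  unfold modalInterval modalKnot
  split_ifs <;> first | omega | subst_vars
  · exact Ioo_subset_Ico_self
  · simpa using Ioo_subset_Ioc_self
  · exact subset_rfl

namespace IsModalMap

theorem strictMonoOn_modalKnot (hf : IsModalMap f a b l c) :
    StrictMonoOn (modalKnot a b l c) (Iic (l + 1)) := by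
  refine strictMonoOn_Iic_of_lt_succ fun m hm => ?_
  rw [Order.succ_eq_add_one]
  rcases Nat.eq_zero_or_pos m with rfl | hm0
  · rw [zero_add, modalKnot_zero, modalKnot_of_mem ⟨le_rfl, hf.one_le⟩]
    exact hf.left_lt
  rcases eq_or_ne m l with rfl | hml
  · rw [modalKnot_succ_self, modalKnot_of_mem ⟨hm0, le_rfl⟩]
    exact hf.lt_right
  · rw [modalKnot_of_mem ⟨hm0, by omega⟩, modalKnot_of_mem ⟨by omega, by omega⟩]
    exact hf.turningPoint_lt m hm0 (by omega)

theorem injOn (hf : IsModalMap f a b l c) : InjOn c (Icc 1 l) := fun i hi j hj h =>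
  hf.strictMonoOn_modalKnot.injOn (mem_Iic.2 (by grind)) (mem_Iic.2 (by grind))
    (by rw [modalKnot_of_mem hi, modalKnot_of_mem hj, h])

theorem Icc_modalKnot_subset (hf : IsModalMap f a b l c) (hj : j ≤ l + 1) :
    Icc (modalKnot a b l c (j - 1)) (modalKnot a b l c j) ⊆ Icc a b := by
  have hk := hf.strictMonoOn_modalKnot.monotoneOn
  refine Icc_subset_Icc ?_ ?_
  · exact modalKnot_zero.symm.trans_le
      (hk (mem_Iic.2 (Nat.zero_le _)) (mem_Iic.2 (by omega)) (Nat.zero_le _))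
  · exact (hk (mem_Iic.2 hj) (mem_Iic.2 le_rfl) hj).trans_eq modalKnot_succ_self

theorem strictMonoOn_lap (hf : IsModalMap f a b l c) (hj : j ∈ Icc 1 (l + 1)) (hodd : Odd j) :
    StrictMonoOn f (Icc (modalKnot a b l c (j - 1)) (modalKnot a b l c j)) :=
  ((hf.strictMonoOn_odd j hj.1 hj.2 hodd).mono
    (Ioo_modalKnot_subset_modalInterval hf.one_le hj)).Icc_of_Ioo
    (hf.continuousOn.mono (hf.Icc_modalKnot_subset hj.2))

theorem strictAntiOn_lap (hf : IsModalMap f a b l c) (hj : j ∈ Icc 1 (l + 1)) (heven : Even j) :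
    StrictAntiOn f (Icc (modalKnot a b l c (j - 1)) (modalKnot a b l c j)) :=
  ((hf.strictAntiOn_even j hj.1 hj.2 heven).mono
    (Ioo_modalKnot_subset_modalInterval hf.one_le hj)).Icc_of_Ioo
    (hf.continuousOn.mono (hf.Icc_modalKnot_subset hj.2))

theorem isStrictLocalExtr (hf : IsModalMap f a b l c) (hi : i ∈ Icc 1 l) :
    IsStrictLocalExtr f (c i) := by
  have hk := hf.strictMonoOn_modalKnot
  have ⟨hi1, hil⟩ := hi
  rw [← modalKnot_of_mem (a := a) (b := b) (c := c) hi]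
  have hleft : modalKnot a b l c (i - 1) < modalKnot a b l c i :=
    hk (mem_Iic.2 (by omega)) (mem_Iic.2 (by omega)) (by omega)
  have hright : modalKnot a b l c i < modalKnot a b l c (i + 1) :=
    hk (mem_Iic.2 (by omega)) (mem_Iic.2 (by omega)) (by omega)
  refine isStrictLocalExtr_of_Icc hleft hright ?_
  have hi' : i ∈ Icc 1 (l + 1) := ⟨hi1, by omega⟩
  have hi'' : i + 1 ∈ Icc 1 (l + 1) := ⟨by omega, by omega⟩
  rcases Nat.even_or_odd i with he | ho
  · exact .inr ⟨hf.strictAntiOn_lap hi' he, by simpa using hf.strictMonoOn_lap hi'' he.add_one⟩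
  · exact .inl ⟨hf.strictMonoOn_lap hi' ho, by simpa using hf.strictAntiOn_lap hi'' ho.add_one⟩

theorem isTurningSet (hf : IsModalMap f a b l c) : IsTurningSet f a b (c '' Icc 1 l) where
  subset_Ioo := by
    rintro _ ⟨i, hi, rfl⟩
    have hk := hf.strictMonoOn_modalKnot
    have ⟨hi1, hil⟩ := hi
    rw [← modalKnot_of_mem (a := a) (b := b) (c := c) hi]
    exact ⟨modalKnot_zero.symm.trans_lt
        (hk (mem_Iic.2 (Nat.zero_le _)) (mem_Iic.2 (by omega)) (by omega)),
      (hk (mem_Iic.2 (by omega)) (mem_Iic.2 le_rfl) (by omega)).trans_eq modalKnot_succ_self⟩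
  finite := (finite_Icc 1 l).image c
  isStrictLocalExtr := by
    rintro _ ⟨i, hi, rfl⟩
    exact hf.isStrictLocalExtr hi
  strictMonoOn_or_strictAntiOn p q hp hq hpq := by
    refine strictMonoOn_or_strictAntiOn_of_pieces (d := modalKnot a b l c) (m := l + 1)
      (fun j hj1 hj2 => ?_) (modalKnot_zero.trans_le hp) (hq.trans_eq modalKnot_succ_self.symm)
      fun i hi0 hil h => Set.disjoint_left.1 hpq ⟨i, ⟨hi0, by omega⟩, ?_⟩ h
    · rcases Nat.even_or_odd j with he | ho
      exacts [.inr (hf.strictAntiOn_lap ⟨hj1, hj2⟩ he), .inl (hf.strictMonoOn_lap ⟨hj1, hj2⟩ ho)]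
    · exact (modalKnot_of_mem ⟨hi0, by omega⟩).symm

end IsModalMap

end Modal

/-- Eqn. (ln-main): the lap number of `f^n` satisfies `ℓ_n = ℓ_{n-1} + s_{n-1}`
and hence `ℓ_n = 1 + Σ_{ν<n} s_ν`, where `s_ν = Σ_i s_ν^i` counts the interior
simple zeros of `f^ν(x) - c_i`. -/
theorem lapNumber_eq_one_add_sum_simpleZeros (a b : ℝ) (l : ℕ) (c : ℕ → ℝ) (f : ℝ → ℝ)
    (hab : a < b) (hl : 1 ≤ l)
    (hc : ∀ i, 1 ≤ i → i < l → c i < c (i + 1)) (hca : a < c 1) (hcb : c l < b)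
    (hcont : ContinuousOn f (Set.Icc a b))
    (hmaps : Set.MapsTo f (Set.Icc a b) (Set.Icc a b))
    (hmono : ∀ j, 1 ≤ j → j ≤ l + 1 → Odd j → StrictMonoOn f (modalInterval a b l c j))
    (hanti : ∀ j, 1 ≤ j → j ≤ l + 1 → Even j → StrictAntiOn f (modalInterval a b l c j))
    (ℓ : ℕ → ℕ) (hlap : ∀ n, IsLapNumber (f^[n]) a b (ℓ n))
    (s : ℕ → ℕ) (hs : ∀ ν, s ν = ∑ i ∈ Finset.Icc 1 l, Nat.card (SimpleZeroSet f a b (c i) ν))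
    (n : ℕ) (hn : 1 ≤ n) :
    ℓ n = ℓ (n - 1) + s (n - 1) ∧ ℓ n = 1 + ∑ ν ∈ Finset.range n, s ν := by
  have hf : IsModalMap f a b l c := ⟨hl, hc, hca, hcb, hcont, hmono, hanti⟩
  have hE : IsTurningSet f a b (c '' ↑(Finset.Icc 1 l)) := by
    simpa only [Finset.coe_Icc] using hf.isTurningSet
  have hinj : InjOn c ↑(Finset.Icc 1 l) := by
    simpa only [Finset.coe_Icc] using hf.injOn
  have hT := hE.iterate hcont hmaps hab
  have hcard : ∀ m, (iterateTurningSet f a b (c '' ↑(Finset.Icc 1 l)) m).ncard =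
      ∑ ν ∈ Finset.range m, s ν := by
    intro m
    induction m with
    | zero => simp [iterateTurningSet_zero]
    | succ m ih =>
      simp only [ncard_iterateTurningSet_succ hinj hT, ih, Finset.sum_range_succ, hs,
        Nat.card_coe_set_eq]
  have hℓ : ∀ m, ℓ m = 1 + ∑ ν ∈ Finset.range m, s ν := fun m => by
    rw [(hlap m).unique ((hT m).isLapNumber hab), hcard, add_comm]
  obtain ⟨k, rfl⟩ := Nat.exists_eq_add_of_le' hn
  refine ⟨?_, hℓ _⟩
  rw [hℓ, hℓ, Finset.sum_range_succ, Nat.add_sub_cancel, add_assoc]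
end

section
/- Let f : [a,b] → [a,b] be a continuous l-modal map. Then there exists a compact interval J = [a',b'] ⊇ [a,b] and a continuous l-modal map F : J → J such that F restricted to [a,b] equals f, F({a',b'}) ⊆ {a',b'} (F is boundary-anchored), and the topological entropy satisfies h(F) = h(f). -/
open Set Function Filter UniformSpace ExpGrowth Dynamics
open scoped SetRel Uniformity ENNReal Topology

section Order

variable {α β : Type*} [LinearOrder α] [Preorder β] {f g : α → β} {s t : Set α}

lemma ite_strictMonoOn_union (d : Bool) {x : α} (hs : IsGreatest s x) (ht : IsLeast t x)
    (h₁ : if d then StrictMonoOn f s else StrictAntiOn f s)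
    (h₂ : if d then StrictMonoOn f t else StrictAntiOn f t) :
    if d then StrictMonoOn f (s ∪ t) else StrictAntiOn f (s ∪ t) := by
  cases d
  exacts [StrictAntiOn.union h₁ h₂ hs ht, StrictMonoOn.union h₁ h₂ hs ht]

lemma ite_strictMonoOn_congr (d : Bool) (h : if d then StrictMonoOn f s else StrictAntiOn f s)
    (hfg : EqOn f g s) : if d then StrictMonoOn g s else StrictAntiOn g s := by
  cases d
  exacts [StrictAntiOn.congr h hfg, StrictMonoOn.congr h hfg]

lemma ite_strictMonoOn_mono (d : Bool) (h : if d then StrictMonoOn f s else StrictAntiOn f s)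
    (hts : t ⊆ s) : if d then StrictMonoOn f t else StrictAntiOn f t := by
  cases d
  exacts [StrictAntiOn.mono h hts, StrictMonoOn.mono h hts]

lemma mem_Icc_of_mem_uIcc_of_notMem {a b a' b' y z : α} (ha : a' ≤ a) (hb : b ≤ b')
    (hz : z ∈ Icc a b) (hy : y ∉ Icc a b) :
    (y ∈ uIcc z a' → y ∈ Icc a' a) ∧ (y ∈ uIcc z b' → y ∈ Icc b b') := by
  rw [uIcc_of_ge (ha.trans hz.1), uIcc_of_le (hz.2.trans hb)]
  exact ⟨fun h => ⟨h.1, le_of_not_gt fun hya => hy ⟨hya.le, h.2.trans hz.2⟩⟩,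
    fun h => ⟨le_of_not_gt fun hyb => hy ⟨hz.1.trans h.1, hyb.le⟩, h.2⟩⟩

end Order

lemma expGrowthSup_natCast_add_one : expGrowthSup (fun n : ℕ ↦ (n : ℝ≥0∞) + 1) = 0 := by
  have hlog : Tendsto (fun n : ℕ ↦ Real.log ((n : ℝ) + 1) / n) atTop (𝓝 0) :=
    ((Real.tendsto_pow_log_div_mul_add_atTop 1 (-1) 1 one_ne_zero).comp
      (tendsto_natCast_atTop_atTop.atTop_add (tendsto_const_nhds (x := (1 : ℝ))))).congr
      fun n => by simp
  refine Tendsto.limsup_eq ?_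
  rw [← EReal.coe_zero]
  refine (EReal.tendsto_coe.2 hlog).congr fun n => ?_
  have hn : (n : ℝ≥0∞) + 1 = ENNReal.ofReal ((n : ℝ) + 1) := by
    rw [ENNReal.ofReal_add n.cast_nonneg zero_le_one, ENNReal.ofReal_natCast, ENNReal.ofReal_one]
  dsimp only
  rw [hn, ENNReal.log_ofReal_of_pos (by positivity), EReal.coe_div]
  rfl

lemma exists_small_cover_of_affine {S : Set ℝ} {g : ℕ → ℝ → ℝ} {k : ℕ} {α β η : ℝ}
    (hη : 0 < η) (haff : ∀ j ≤ k, ∃ m, ∀ x ∈ S, ∀ y ∈ S, g j x - g j y = m * (x - y))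
    (hmaps : ∀ j ≤ k, MapsTo (g j) S (Icc α β)) :
    ∃ P : Fin (⌊(β - α) / η⌋₊ + 1) → Set ℝ,
      S ⊆ ⋃ i, P i ∧ ∀ i, ∀ x ∈ P i, ∀ y ∈ P i, ∀ j ≤ k, |g j x - g j y| < η := by
  choose! m hm using haff
  -- Cutting `S` according to the most expanding `g j₀` controls all the others.
  obtain ⟨j₀, hj₀, hmax⟩ := Finset.exists_max_image (Finset.range (k + 1)) (fun j => |m j|)
    Finset.nonempty_range_add_one
  have hj₀k : j₀ ≤ k := Nat.lt_succ_iff.1 (Finset.mem_range.1 hj₀)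
  let bin : ℝ → ℕ := fun x => ⌊(g j₀ x - α) / η⌋₊
  refine ⟨fun i => {x ∈ S | bin x = i}, fun x hx => ?_, ?_⟩
  · have hbin : bin x < ⌊(β - α) / η⌋₊ + 1 := Nat.lt_succ_of_le (Nat.floor_mono
      (div_le_div_of_nonneg_right (by linarith [(hmaps j₀ hj₀k hx).2]) hη.le))
    exact mem_iUnion.2 ⟨⟨bin x, hbin⟩, hx, rfl⟩
  · rintro i x ⟨hx, hxi⟩ y ⟨hy, hyi⟩ j hj
    have hbin : ∀ z ∈ S, (bin z : ℝ) ≤ (g j₀ z - α) / η ∧ (g j₀ z - α) / η < bin z + 1 :=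
      fun z hz => ⟨Nat.floor_le (div_nonneg (by linarith [(hmaps j₀ hj₀k hz).1]) hη.le),
        Nat.lt_floor_add_one _⟩
    have hx' := hbin x hx
    have hy' := hbin y hy
    rw [hxi] at hx'
    rw [hyi] at hy'
    have hj₀ : |g j₀ x - g j₀ y| < η := by
      have : |(g j₀ x - α) / η - (g j₀ y - α) / η| < 1 := by
        rw [abs_sub_lt_iff]; constructor <;> linarith
      rwa [← sub_div, sub_sub_sub_cancel_right, abs_div, abs_of_pos hη, div_lt_one hη] at this
    calc |g j x - g j y| = |m j| * |x - y| := by rw [hm j hj x hx y hy, abs_mul]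
      _ ≤ |m j₀| * |x - y| :=
        mul_le_mul_of_nonneg_right (hmax j (Finset.mem_range.2 (by omega))) (abs_nonneg _)
      _ = |g j₀ x - g j₀ y| := by rw [hm j₀ hj₀k x hx y hy, abs_mul]
      _ < η := hj₀

namespace Dynamics

section Avoiding

variable {X : Type*} {T : X → X} {U : SetRel X X}

def avoidingSet (T : X → X) (A : Set X) (k : ℕ) : Set X := {x | ∀ j < k, T^[j] x ∉ A}

lemma exists_le_mem_avoidingSet (T : X → X) (A : Set X) (n : ℕ) (y : X) :
    ∃ k ≤ n, y ∈ avoidingSet T A k ∧ (k < n → T^[k] y ∈ A) := by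
  classical
  by_cases h : ∃ j, j < n ∧ T^[j] y ∈ A
  · exact ⟨Nat.find h, (Nat.find_spec h).1.le,
      fun j hj hjA => Nat.find_min h hj ⟨hj.trans (Nat.find_spec h).1, hjA⟩,
      fun _ => (Nat.find_spec h).2⟩
  · push Not at h
    exact ⟨n, le_rfl, h, fun hn => (lt_irrefl n hn).elim⟩

lemma prodMk_mem_dynEntourage_comp [U.IsRefl] [U.IsSymm] {P : Set X} {k n : ℕ} {x y r : X}
    (hk : k ≤ n) (hP : P ×ˢ P ⊆ dynEntourage T U k) (hy : y ∈ P) (hr : r ∈ P)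
    (hyx : (T^[k] y, x) ∈ dynEntourage T U (n - k))
    (hrx : (T^[k] r, x) ∈ dynEntourage T U (n - k)) :
    (y, r) ∈ dynEntourage T (U ○ U) n := by
  rw [mem_dynEntourage]
  intro j hj
  rcases lt_or_ge j k with hjk | hkj
  · exact SetRel.left_subset_comp (mem_dynEntourage.1 (hP ⟨hy, hr⟩) j hjk)
  · obtain ⟨m, rfl⟩ := Nat.exists_eq_add_of_le' hkj
    have hy' := mem_dynEntourage.1 hyx m (by omega)
    have hr' := mem_dynEntourage.1 hrx m (by omega)
    rw [← iterate_add_apply] at hy' hr'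
    exact SetRel.prodMk_mem_comp hy' (SetRel.symm U hr')

variable {ι : Type*} [Fintype ι] [U.IsRefl] [U.IsSymm] {K A : Set X} {n : ℕ}

lemma exists_isDynCoverOf_card_le_of_pieces {s : Finset X} (hs : IsDynCoverOf T A U n s)
    (hs₀ : s.Nonempty) (P : ℕ → ι → Set X)
    (hcover : ∀ k ≤ n, K ∩ avoidingSet T A k ⊆ ⋃ i, P k i)
    (hsmall : ∀ k ≤ n, ∀ i, P k i ×ˢ P k i ⊆ dynEntourage T U k) :
    ∃ t : Finset X, IsDynCoverOf T K (U ○ U) n t ∧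
      t.card ≤ Fintype.card ι * (n + 1) * s.card := by
  classical
  -- A point entering `A` at time `k` lies in a piece `P k i`, and its `k`-th iterate is shadowed
  -- by some `x ∈ s`; any point with the same `(k, i, x)` then shadows it up to time `n`.
  let Q : ℕ × ι × X → Set X := fun ⟨k, i, x⟩ =>
    P k i ∩ {z | (T^[k] z, x) ∈ dynEntourage T U (n - k)}
  have hrep : ∀ q, ∃ r, (Q q).Nonempty → r ∈ Q q := fun q =>
    if h : (Q q).Nonempty then ⟨h.some, fun _ => h.some_mem⟩ else ⟨q.2.2, fun h' => (h h').elim⟩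
  choose rep hrep using hrep
  let idx := Finset.range (n + 1) ×ˢ (Finset.univ : Finset ι) ×ˢ s
  refine ⟨idx.image rep, fun y hy => ?_, ?_⟩
  · obtain ⟨k, hkn, hyk, hentry⟩ := exists_le_mem_avoidingSet T A n y
    obtain ⟨i, hyi⟩ := mem_iUnion.1 (hcover k hkn ⟨hy, hyk⟩)
    obtain ⟨x, hxs, hyx⟩ : ∃ x ∈ s, (T^[k] y, x) ∈ dynEntourage T U (n - k) := by
      rcases hkn.lt_or_eq with hkn' | rfl
      · obtain ⟨x, hxs, hyx⟩ := hs (hentry hkn')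
        exact ⟨x, hxs, dynEntourage_mono subset_rfl (Nat.sub_le n k) hyx⟩
      · exact ⟨hs₀.choose, hs₀.choose_spec, by simp⟩
    obtain ⟨hri, hrx⟩ := hrep (k, i, x) ⟨y, hyi, hyx⟩
    refine ⟨rep (k, i, x), Finset.mem_coe.2 (Finset.mem_image_of_mem _ ?_), ?_⟩
    · simp [idx, Nat.lt_succ_of_le hkn, hxs]
    · exact prodMk_mem_dynEntourage_comp hkn (hsmall k hkn i) hyi hri hyx hrx
  · calc (idx.image rep).card ≤ idx.card := Finset.card_image_le
      _ = Fintype.card ι * (n + 1) * s.card := by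
        simp only [idx, Finset.card_product, Finset.card_range, Finset.card_univ]
        ring

lemma coverMincard_comp_le_of_pieces [Nonempty ι] (hA : A.Nonempty) (P : ℕ → ι → Set X)
    (hcover : ∀ k ≤ n, K ∩ avoidingSet T A k ⊆ ⋃ i, P k i)
    (hsmall : ∀ k ≤ n, ∀ i, P k i ×ˢ P k i ⊆ dynEntourage T U k) :
    coverMincard T K (U ○ U) n ≤ (Fintype.card ι * (n + 1) : ℕ) * coverMincard T A U n := by
  rcases eq_top_or_lt_top (coverMincard T A U n) with htop | hfin
  · rw [htop, ENat.mul_top (by simp [Fintype.card_ne_zero])]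
    exact le_top
  obtain ⟨s, hs, hcard⟩ := (coverMincard_finite_iff T A U n).1 hfin
  obtain ⟨t, ht, htcard⟩ := exists_isDynCoverOf_card_le_of_pieces hs
    (Finset.coe_nonempty.1 (hs.nonempty hA)) P hcover hsmall
  rw [← hcard]
  exact ht.coverMincard_le_card.trans (by exact_mod_cast htcard)

end Avoiding

variable {X : Type*} [UniformSpace X] {T : X → X}

theorem coverEntropy_le_of_coverMincard_le {K A : Set X}
    (h : ∀ U ∈ 𝓤 X, ∃ V ∈ 𝓤 X, ∃ C : ℕ,
      ∀ n, coverMincard T K U n ≤ (C * (n + 1) : ℕ) * coverMincard T A V n) :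
    coverEntropy T K ≤ coverEntropy T A := by
  refine iSup₂_le fun U hU => ?_
  obtain ⟨V, hV, C, hC⟩ := h U hU
  have hbound : ∀ n, (coverMincard T K U n : ℝ≥0∞)
      ≤ C * (((n : ℝ≥0∞) + 1) * coverMincard T A V n) := fun n => by
    simpa [ENat.toENNReal_mul, mul_assoc] using ENat.toENNReal_mono (hC n)
  calc coverEntropyEntourage T K U
      ≤ expGrowthSup ((fun n : ℕ ↦ (n : ℝ≥0∞) + 1) * fun n ↦ (coverMincard T A V n : ℝ≥0∞)) :=
        expGrowthSup_le_of_eventually_le (ENNReal.natCast_ne_top C) (.of_forall hbound)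
    _ ≤ 0 + coverEntropyEntourage T A V := by
        rw [← expGrowthSup_natCast_add_one]
        exact expGrowthSup_mul_le (by simp [expGrowthSup_natCast_add_one])
          (by simp [expGrowthSup_natCast_add_one])
    _ ≤ coverEntropy T A := by
        rw [zero_add]; exact coverEntropyEntourage_le_coverEntropy T A hV

lemma coverEntropy_congr {S : X → X} {F : Set X} (hT : MapsTo T F F) (hTS : EqOn T S F) :
    coverEntropy T F = coverEntropy S F := by
  have hS : MapsTo S F F := fun x hx => hTS hx ▸ hT hx
  rw [← coverEntropy_restrict hT, ← coverEntropy_restrict hS]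
  congr 1
  funext x
  exact Subtype.ext (hTS x.2)

section AffineCollars

variable {R ι : Type*} {T : R → R} {A : Set R} {C : ι → Set R}

lemma exists_iterate_mem_of_mem_avoidingSet
    (hnext : ∀ i, ∃ i', ∀ x ∈ C i, T x ∉ A → T x ∈ C i') (i : ι) (k : ℕ) :
    ∀ j < k, ∃ i', ∀ x ∈ C i ∩ avoidingSet T A k, T^[j] x ∈ C i' := by
  intro j
  induction j with
  | zero => exact fun _ => ⟨i, fun x hx => hx.1⟩
  | succ j ih =>
    intro hj
    obtain ⟨i₁, hi₁⟩ := ih (by omega)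
    obtain ⟨i₂, hi₂⟩ := hnext i₁
    refine ⟨i₂, fun x hx => ?_⟩
    rw [iterate_succ_apply']
    exact hi₂ _ (hi₁ x hx) (iterate_succ_apply' T j x ▸ hx.2 _ hj)

lemma exists_iterate_sub_eq_mul_of_mem_avoidingSet [CommRing R]
    (haff : ∀ i, ∃ m, ∀ x ∈ C i, ∀ y ∈ C i, T x - T y = m * (x - y))
    (hnext : ∀ i, ∃ i', ∀ x ∈ C i, T x ∉ A → T x ∈ C i') (i : ι) (k : ℕ) :
    ∀ j ≤ k, ∃ m, ∀ x ∈ C i ∩ avoidingSet T A k, ∀ y ∈ C i ∩ avoidingSet T A k,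
      T^[j] x - T^[j] y = m * (x - y) := by
  intro j
  induction j with
  | zero => exact fun _ => ⟨1, fun x _ y _ => by simp⟩
  | succ j ih =>
    intro hj
    obtain ⟨m, hm⟩ := ih (by omega)
    obtain ⟨i', hi'⟩ := exists_iterate_mem_of_mem_avoidingSet hnext i k j (by omega)
    obtain ⟨m', hm'⟩ := haff i'
    refine ⟨m' * m, fun x hx y hy => ?_⟩
    rw [iterate_succ_apply', iterate_succ_apply', hm' _ (hi' x hx) _ (hi' y hy), hm x hx y hy,
      mul_assoc]

variable {T : ℝ → ℝ} {K A : Set ℝ} {C : ι → Set ℝ}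

lemma exists_small_pieces_of_affine_collars [Nonempty ι] {α β η : ℝ} (hη : 0 < η)
    (hK : MapsTo T K K) (hKb : K ⊆ Icc α β) (hKC : K ⊆ A ∪ ⋃ i, C i)
    (haff : ∀ i, ∃ m, ∀ x ∈ C i, ∀ y ∈ C i, T x - T y = m * (x - y))
    (hnext : ∀ i, ∃ i', ∀ x ∈ C i, T x ∉ A → T x ∈ C i') (k : ℕ) :
    ∃ P : ι × Fin (⌊(β - α) / η⌋₊ + 1) → Set ℝ, K ∩ avoidingSet T A k ⊆ ⋃ p, P p ∧
      ∀ p, P p ×ˢ P p ⊆ dynEntourage T {q | dist q.1 q.2 < η} k := by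
  rcases Nat.eq_zero_or_pos k with rfl | hk
  · exact ⟨fun _ => univ, fun x _ => mem_iUnion.2 ⟨Classical.arbitrary _, trivial⟩, by simp⟩
  have hpieces : ∀ i, ∃ P : Fin (⌊(β - α) / η⌋₊ + 1) → Set ℝ,
      K ∩ (C i ∩ avoidingSet T A k) ⊆ ⋃ m, P m ∧
      ∀ m, ∀ x ∈ P m, ∀ y ∈ P m, ∀ j ≤ k, |T^[j] x - T^[j] y| < η := fun i =>
    exists_small_cover_of_affine hη
      (fun j hj => (exists_iterate_sub_eq_mul_of_mem_avoidingSet haff hnext i k j hj).imp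
        fun _ h x hx y hy => h x hx.2 y hy.2)
      (fun j _ _ hx => hKb (hK.iterate j hx.1))
  choose P hPcover hPsmall using hpieces
  refine ⟨fun p => P p.1 p.2, fun x hx => ?_, fun p => ?_⟩
  · obtain ⟨i, hi⟩ := mem_iUnion.1 ((hKC hx.1).resolve_left (hx.2 0 hk))
    obtain ⟨m, hm⟩ := mem_iUnion.1 (hPcover i ⟨hx.1, hi, hx.2⟩)
    exact mem_iUnion.2 ⟨(i, m), hm⟩
  · rintro ⟨x, y⟩ ⟨hx, hy⟩
    exact mem_dynEntourage.2 fun j hj => by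
      simpa [Real.dist_eq] using hPsmall p.1 p.2 x hx y hy j hj.le

theorem coverEntropy_le_of_affine_collars [Finite ι] [Nonempty ι] (hK : MapsTo T K K)
    (hKb : Bornology.IsBounded K) (hA : A.Nonempty) (hKC : K ⊆ A ∪ ⋃ i, C i)
    (haff : ∀ i, ∃ m, ∀ x ∈ C i, ∀ y ∈ C i, T x - T y = m * (x - y))
    (hnext : ∀ i, ∃ i', ∀ x ∈ C i, T x ∉ A → T x ∈ C i') :
    coverEntropy T K ≤ coverEntropy T A := by
  have := Fintype.ofFinite ι
  refine coverEntropy_le_of_coverMincard_le fun U hU => ?_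
  obtain ⟨V, hV, hVsymm, hVU⟩ := comp_symm_mem_uniformity_sets hU
  have := isRefl_of_mem_uniformity hV
  obtain ⟨η, hη, hηV⟩ := Metric.mem_uniformity_dist.1 hV
  choose P hPcover hPsmall using exists_small_pieces_of_affine_collars hη hK
    hKb.subset_Icc_sInf_sSup hKC haff hnext
  exact ⟨V, hV, _, fun n => (coverMincard_antitone T K n hVU).trans
    (coverMincard_comp_le_of_pieces hA P (fun k _ => hPcover k)
      fun k _ p => (hPsmall k p).trans (dynEntourage_mono (fun _ hq => hηV hq) le_rfl))⟩

end AffineCollars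

end Dynamics

section Modal

variable {a b α β : ℝ} {l : ℕ} {c : ℕ → ℝ}

lemma modalInterval_subset_Icc (hl : 1 ≤ l) (hc : ∀ i ∈ Icc 1 l, c i ∈ Ioo a b) {j : ℕ}
    (hj₁ : 1 ≤ j) (hjl : j ≤ l + 1) : modalInterval a b l c j ⊆ Icc a b := by
  unfold modalInterval
  split_ifs with h₁ h₂
  · subst h₁; exact Ico_subset_Icc_self.trans (Icc_subset_Icc_right (hc 1 ⟨le_rfl, hl⟩).2.le)
  · subst h₂; exact Ioc_subset_Icc_self.trans (Icc_subset_Icc_left (hc l ⟨hl, le_rfl⟩).1.le)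
  · exact Ioo_subset_Icc_self.trans (Icc_subset_Icc (hc (j - 1) ⟨by omega, by omega⟩).1.le
      (hc j ⟨hj₁, by omega⟩).2.le)

theorem ite_strictMonoOn_modalInterval_of_collars {F f : ℝ → ℝ} {up : ℕ → Bool} (hl : 1 ≤ l)
    (hαa : α ≤ a) (hbβ : b ≤ β) (hc : ∀ i ∈ Icc 1 l, c i ∈ Ioo a b) (hFf : EqOn F f (Icc a b))
    (hL : if up 1 then StrictMonoOn F (Icc α a) else StrictAntiOn F (Icc α a))
    (hR : if up (l + 1) then StrictMonoOn F (Icc b β) else StrictAntiOn F (Icc b β))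
    (hf : ∀ j, 1 ≤ j → j ≤ l + 1 → if up j then StrictMonoOn f (modalInterval a b l c j)
      else StrictAntiOn f (modalInterval a b l c j)) (j : ℕ) (hj₁ : 1 ≤ j) (hjl : j ≤ l + 1) :
    if up j then StrictMonoOn F (modalInterval α β l c j)
      else StrictAntiOn F (modalInterval α β l c j) := by
  have hF := ite_strictMonoOn_congr _ (hf j hj₁ hjl)
    (hFf.symm.mono (modalInterval_subset_Icc hl hc hj₁ hjl))
  by_cases h₁ : j = 1
  · subst h₁
    simp only [modalInterval, if_true] at hF ⊢
    rw [← Icc_union_Ico_eq_Ico hαa (hc 1 ⟨le_rfl, hl⟩).1]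
    exact ite_strictMonoOn_union _ (isGreatest_Icc hαa) (isLeast_Ico (hc 1 ⟨le_rfl, hl⟩).1) hL hF
  by_cases h₂ : j = l + 1
  · subst h₂
    simp only [modalInterval, if_neg h₁, if_true] at hF ⊢
    rw [← Ioc_union_Icc_eq_Ioc (hc l ⟨hl, le_rfl⟩).2 hbβ]
    exact ite_strictMonoOn_union _ (isGreatest_Ioc (hc l ⟨hl, le_rfl⟩).2) (isLeast_Icc hbβ) hF hR
  · simpa only [modalInterval, if_neg h₁, if_neg h₂] using hF

end Modal

/-- Extension of `f` from `[a, b]` to `[a - 1, b + 1]` that interpolates affinely between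
`p` at `a - 1` and `f a` at `a`, and between `f b` at `b` and `q` at `b + 1`. -/
noncomputable def collarExtension (f : ℝ → ℝ) (a b p q : ℝ) (x : ℝ) : ℝ :=
  if x < a then f a + (a - x) * (p - f a) else if x ≤ b then f x else f b + (x - b) * (q - f b)

namespace collarExtension

variable {f : ℝ → ℝ} {a b p q x y : ℝ}

lemma eqOn : EqOn (collarExtension f a b p q) f (Icc a b) := fun x hx => by
  simp [collarExtension, not_lt.2 hx.1, hx.2]

lemma apply_of_le (hab : a ≤ b) (hx : x ≤ a) :
    collarExtension f a b p q x = f a + (a - x) * (p - f a) := by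
  rcases hx.lt_or_eq with hx | rfl
  · simp [collarExtension, hx]
  · simp [collarExtension, hab]

lemma apply_of_ge (hab : a ≤ b) (hx : b ≤ x) :
    collarExtension f a b p q x = f b + (x - b) * (q - f b) := by
  rcases hx.lt_or_eq with hx | rfl
  · simp [collarExtension, not_lt.2 (hab.trans hx.le), not_le.2 hx]
  · simp [collarExtension, not_lt.2 hab]

lemma apply_sub_one (hab : a ≤ b) : collarExtension f a b p q (a - 1) = p := by
  rw [apply_of_le hab (by linarith)]; ring

lemma apply_add_one (hab : a ≤ b) : collarExtension f a b p q (b + 1) = q := by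
  rw [apply_of_ge hab (by linarith)]; ring

lemma sub_of_le (hab : a ≤ b) (hx : x ≤ a) (hy : y ≤ a) :
    collarExtension f a b p q x - collarExtension f a b p q y = (f a - p) * (x - y) := by
  rw [apply_of_le hab hx, apply_of_le hab hy]; ring

lemma sub_of_ge (hab : a ≤ b) (hx : b ≤ x) (hy : b ≤ y) :
    collarExtension f a b p q x - collarExtension f a b p q y = (q - f b) * (x - y) := by
  rw [apply_of_ge hab hx, apply_of_ge hab hy]; ring

lemma continuous (hab : a ≤ b) (hf : ContinuousOn f (Icc a b)) :
    Continuous (collarExtension f a b p q) := by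
  have hL : ContinuousOn (collarExtension f a b p q) (Iic a) :=
    (by fun_prop : Continuous fun x => f a + (a - x) * (p - f a)).continuousOn.congr
      fun x hx => apply_of_le hab hx
  have hR : ContinuousOn (collarExtension f a b p q) (Ici b) :=
    (by fun_prop : Continuous fun x => f b + (x - b) * (q - f b)).continuousOn.congr
      fun x hx => apply_of_ge hab hx
  have hM : ContinuousOn (collarExtension f a b p q) (Icc a b) := hf.congr eqOn
  have hLM : ContinuousOn (collarExtension f a b p q) (Iic b) := by
    rw [← Iic_union_Icc_eq_Iic hab]
    exact hL.union_of_isClosed hM isClosed_Iic isClosed_Icc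
  rw [← continuousOn_univ, ← Iic_union_Ici (a := b)]
  exact hLM.union_of_isClosed hR isClosed_Iic isClosed_Ici

lemma mem_uIcc_of_le (hab : a ≤ b) (hx : x ∈ Icc (a - 1) a) :
    collarExtension f a b p q x ∈ uIcc (f a) p := by
  rw [apply_of_le hab hx.2]
  simpa using (convex_uIcc (f a) p).add_smul_sub_mem left_mem_uIcc right_mem_uIcc
    (t := a - x) ⟨by linarith [hx.2], by linarith [hx.1]⟩

lemma mem_uIcc_of_ge (hab : a ≤ b) (hx : x ∈ Icc b (b + 1)) :
    collarExtension f a b p q x ∈ uIcc (f b) q := by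
  rw [apply_of_ge hab hx.1]
  simpa using (convex_uIcc (f b) q).add_smul_sub_mem left_mem_uIcc right_mem_uIcc
    (t := x - b) ⟨by linarith [hx.1], by linarith [hx.2]⟩

lemma mapsTo (hab : a ≤ b) (hf : MapsTo f (Icc a b) (Icc a b)) (hp : p ∈ Icc (a - 1) (b + 1))
    (hq : q ∈ Icc (a - 1) (b + 1)) :
    MapsTo (collarExtension f a b p q) (Icc (a - 1) (b + 1)) (Icc (a - 1) (b + 1)) := by
  have hAK : Icc a b ⊆ Icc (a - 1) (b + 1) := Icc_subset_Icc (by linarith) (by linarith)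
  intro x hx
  rcases le_or_gt x a with hxa | hax
  · exact uIcc_subset_Icc (hAK (hf ⟨le_rfl, hab⟩)) hp (mem_uIcc_of_le hab ⟨hx.1, hxa⟩)
  rcases le_or_gt x b with hxb | hbx
  · exact hAK (eqOn ⟨hax.le, hxb⟩ ▸ hf ⟨hax.le, hxb⟩)
  · exact uIcc_subset_Icc (hAK (hf ⟨hab, le_rfl⟩)) hq (mem_uIcc_of_ge hab ⟨hbx.le, hx.2⟩)

lemma ite_strictMonoOn_Iic (hab : a ≤ b) (hfa : f a ∈ Icc a b) (d : Bool) :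
    if d then StrictMonoOn (collarExtension f a b (if d then a - 1 else b + 1) q) (Iic a)
      else StrictAntiOn (collarExtension f a b (if d then a - 1 else b + 1) q) (Iic a) := by
  cases d <;> simp only [Bool.false_eq_true, ↓reduceIte] <;> intro x hx y hy hxy
  · nlinarith [sub_of_le (f := f) (p := b + 1) (q := q) hab hy hx, hfa.2]
  · nlinarith [sub_of_le (f := f) (p := a - 1) (q := q) hab hy hx, hfa.1]

lemma ite_strictMonoOn_Ici (hab : a ≤ b) (hfb : f b ∈ Icc a b) (d : Bool) :
    if d then StrictMonoOn (collarExtension f a b p (if d then b + 1 else a - 1)) (Ici b)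
      else StrictAntiOn (collarExtension f a b p (if d then b + 1 else a - 1)) (Ici b) := by
  cases d <;> simp only [Bool.false_eq_true, ↓reduceIte] <;> intro x hx y hy hxy
  · nlinarith [sub_of_ge (f := f) (p := p) (q := a - 1) hab hy hx, hfb.1]
  · nlinarith [sub_of_ge (f := f) (p := p) (q := b + 1) hab hy hx, hfb.2]

theorem coverEntropy_eq (hab : a ≤ b) (hf : MapsTo f (Icc a b) (Icc a b))
    (hp : p ∈ ({a - 1, b + 1} : Set ℝ)) (hq : q ∈ ({a - 1, b + 1} : Set ℝ)) :
    coverEntropy (collarExtension f a b p q) (Icc (a - 1) (b + 1)) = coverEntropy f (Icc a b) := by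
  have hpair : ({a - 1, b + 1} : Set ℝ) ⊆ Icc (a - 1) (b + 1) :=
    pair_subset (left_mem_Icc.2 (by linarith)) (right_mem_Icc.2 (by linarith))
  have hK := mapsTo hab hf (hpair hp) (hpair hq)
  have hA : MapsTo (collarExtension f a b p q) (Icc a b) (Icc a b) := fun x hx => eqOn hx ▸ hf hx
  have hfa := hf ⟨le_rfl, hab⟩
  have hfb := hf ⟨hab, le_rfl⟩
  have hcollar := fun y z (hz : z ∈ Icc a b) (hy : y ∉ Icc a b) =>
    mem_Icc_of_mem_uIcc_of_notMem (a' := a - 1) (b' := b + 1) (by linarith) (by linarith) hz hy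
  rw [← coverEntropy_congr hA eqOn]
  refine le_antisymm (coverEntropy_le_of_affine_collars
    (C := fun s : Bool => if s then Icc (a - 1) a else Icc b (b + 1)) hK (Metric.isBounded_Icc _ _)
    ⟨a, left_mem_Icc.2 hab⟩ (fun x hx => ?_) (fun s => ?_) (fun s => ?_))
    (coverEntropy_monotone _ (Icc_subset_Icc (by linarith) (by linarith)))
  · rcases le_or_gt x a with hxa | hax
    · exact Or.inr (mem_iUnion.2 ⟨true, hx.1, hxa⟩)
    rcases le_or_gt x b with hxb | hbx
    · exact Or.inl ⟨hax.le, hxb⟩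
    · exact Or.inr (mem_iUnion.2 ⟨false, hbx.le, hx.2⟩)
  · cases s
    · exact ⟨q - f b, fun x hx y hy => sub_of_ge hab hx.1 hy.1⟩
    · exact ⟨f a - p, fun x hx y hy => sub_of_le hab hx.2 hy.2⟩
  · cases s
    · rcases hq with rfl | rfl
      · exact ⟨true, fun x hx hxA => (hcollar _ _ hfb hxA).1 (mem_uIcc_of_ge hab hx)⟩
      · exact ⟨false, fun x hx hxA => (hcollar _ _ hfb hxA).2 (mem_uIcc_of_ge hab hx)⟩
    · rcases hp with rfl | rfl
      · exact ⟨true, fun x hx hxA => (hcollar _ _ hfa hxA).1 (mem_uIcc_of_le hab hx)⟩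
      · exact ⟨false, fun x hx hxA => (hcollar _ _ hfa hxA).2 (mem_uIcc_of_le hab hx)⟩

end collarExtension

theorem exists_boundaryAnchored_extension_coverEntropy_eq_general
    (a b : ℝ) (l : ℕ) (c : ℕ → ℝ) (f : ℝ → ℝ) (up : ℕ → Bool)
    (hab : a < b) (hl : 1 ≤ l)
    (hc : ∀ i, 1 ≤ i → i < l → c i < c (i + 1)) (hca : a < c 1) (hcb : c l < b)
    (hcont : ContinuousOn f (Set.Icc a b))
    (hmaps : Set.MapsTo f (Set.Icc a b) (Set.Icc a b))
    (hdir : ∀ j, 1 ≤ j → j ≤ l + 1 →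
      (if up j then StrictMonoOn f (modalInterval a b l c j)
        else StrictAntiOn f (modalInterval a b l c j))) :
    ∃ (a' b' : ℝ) (F : ℝ → ℝ), a' ≤ a ∧ b ≤ b' ∧
      ContinuousOn F (Set.Icc a' b') ∧
      Set.MapsTo F (Set.Icc a' b') (Set.Icc a' b') ∧
      Set.EqOn F f (Set.Icc a b) ∧
      F a' ∈ ({a', b'} : Set ℝ) ∧ F b' ∈ ({a', b'} : Set ℝ) ∧
      (∀ j, 1 ≤ j → j ≤ l + 1 →
        (if up j then StrictMonoOn F (modalInterval a' b' l c j)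
          else StrictAntiOn F (modalInterval a' b' l c j))) ∧
      Dynamics.coverEntropy F (Set.Icc a' b') = Dynamics.coverEntropy f (Set.Icc a b) := by
  have hcmono : MonotoneOn c (Icc 1 l) :=
    monotoneOn_of_le_add_one ordConnected_Icc fun i _ hi hi' => (hc i hi.1 hi'.2).le
  have hcab : ∀ i ∈ Icc 1 l, c i ∈ Ioo a b := fun i hi =>
    ⟨hca.trans_le (hcmono ⟨le_rfl, hl⟩ hi hi.1), (hcmono hi ⟨hl, le_rfl⟩ hi.2).trans_lt hcb⟩
  set p := if up 1 then a - 1 else b + 1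
  set q := if up (l + 1) then b + 1 else a - 1
  have hp : p ∈ ({a - 1, b + 1} : Set ℝ) := by unfold p; split_ifs <;> simp
  have hq : q ∈ ({a - 1, b + 1} : Set ℝ) := by unfold q; split_ifs <;> simp
  have hpair : ({a - 1, b + 1} : Set ℝ) ⊆ Icc (a - 1) (b + 1) :=
    pair_subset (left_mem_Icc.2 (by linarith)) (right_mem_Icc.2 (by linarith))
  refine ⟨a - 1, b + 1, collarExtension f a b p q, by linarith, by linarith,
    (collarExtension.continuous hab.le hcont).continuousOn,
    collarExtension.mapsTo hab.le hmaps (hpair hp) (hpair hq), collarExtension.eqOn, ?_, ?_,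
    ite_strictMonoOn_modalInterval_of_collars hl (by linarith) (by linarith) hcab
      collarExtension.eqOn ?_ ?_ hdir, collarExtension.coverEntropy_eq hab.le hmaps hp hq⟩
  · rwa [collarExtension.apply_sub_one hab.le]
  · rwa [collarExtension.apply_add_one hab.le]
  · exact ite_strictMonoOn_mono _
      (collarExtension.ite_strictMonoOn_Iic hab.le (hmaps ⟨le_rfl, hab.le⟩) (up 1))
      Icc_subset_Iic_self
  · exact ite_strictMonoOn_mono _
      (collarExtension.ite_strictMonoOn_Ici hab.le (hmaps ⟨hab.le, le_rfl⟩) (up (l + 1)))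
      Icc_subset_Ici_self

/-- Theorem 3: every continuous `l`-modal map `f` of `[a,b]` extends to a
boundary-anchored continuous `l`-modal map `F` of a larger interval `[a',b']`
with the same topological entropy. The monotonicity direction on the `j`-th
interval is recorded by `up j`, alternating between consecutive intervals. -/
theorem exists_boundaryAnchored_extension_coverEntropy_eq
    (a b : ℝ) (l : ℕ) (c : ℕ → ℝ) (f : ℝ → ℝ) (up : ℕ → Bool)
    (hab : a < b) (hl : 1 ≤ l)
    (hc : ∀ i, 1 ≤ i → i < l → c i < c (i + 1)) (hca : a < c 1) (hcb : c l < b)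
    (hcont : ContinuousOn f (Set.Icc a b))
    (hmaps : Set.MapsTo f (Set.Icc a b) (Set.Icc a b))
    (hdir : ∀ j, 1 ≤ j → j ≤ l + 1 →
      (if up j then StrictMonoOn f (modalInterval a b l c j)
        else StrictAntiOn f (modalInterval a b l c j)))
    (halt : ∀ j, 1 ≤ j → j ≤ l → up (j + 1) = !up j) :
    ∃ (a' b' : ℝ) (F : ℝ → ℝ), a' ≤ a ∧ b ≤ b' ∧
      ContinuousOn F (Set.Icc a' b') ∧
      Set.MapsTo F (Set.Icc a' b') (Set.Icc a' b') ∧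
      Set.EqOn F f (Set.Icc a b) ∧
      F a' ∈ ({a', b'} : Set ℝ) ∧ F b' ∈ ({a', b'} : Set ℝ) ∧
      (∀ j, 1 ≤ j → j ≤ l + 1 →
        (if up j then StrictMonoOn F (modalInterval a' b' l c j)
          else StrictAntiOn F (modalInterval a' b' l c j))) ∧
      Dynamics.coverEntropy F (Set.Icc a' b') = Dynamics.coverEntropy f (Set.Icc a b) :=
  exists_boundaryAnchored_extension_coverEntropy_eq_general a b l c f up hab hl hc hca hcb hcont
    hmaps hdir
end

section
/- Let g : X → X be a continuous selfmap of a compact metric space and let Ω(g) be its nonwandering set. Then h(g) = h(g restricted to Ω(g)). -/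
/-- The set of nonwandering points of `g`: points all of whose neighborhoods
return to themselves under some positive iterate of `g`. -/
def nonWanderingSet {X : Type*} [TopologicalSpace X] (g : X → X) : Set X :=
  {x | ∀ U ∈ nhds x, ∃ n, 1 ≤ n ∧ (g^[n] '' U ∩ U).Nonempty}

/-!
`h(g|Ω(g)) ≤ h(g)` is monotonicity of entropy in the set. For the converse, fix an entourage `V`
and a `(V, n₀)`-dynamical cover `E` of `Ω(g)` with `log |E| / n₀` close to `h(g|Ω(g))`. The union
`O` of the dynamical balls around `E` is an open neighbourhood of `Ω(g)`, so its compact complement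
is covered by finitely many, say `q`, `V`-small wandering sets, and an orbit meets each of them at
most once. Cut an orbit segment of length `n₀ N` greedily into single steps at the (at most `q`)
visits to the wandering sets and blocks of length `n₀` elsewhere; every block starts in `O`. The
visit times and the balls containing the starting points of the blocks determine the segment up to
`V ○ V`, which leaves at most `(n₀ N + 1) ^ q * |E| ^ (N + q)` possibilities. The polynomial factor
has no exponential growth, so `h(g) ≤ log |E| / n₀`.
-/

open Set Filter Topology UniformSpace
open scoped ENNReal Uniformity SetRel

namespace ExpGrowth

lemma expGrowthSup_nonpos_of_comp_two_mul_le {u : ℕ → ℝ≥0∞} (hu : Monotone u) {b : ℝ≥0∞}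
    (hb : b ≠ ∞) (h : ∀ n, u (2 * n) ≤ b * u n) (htop : expGrowthSup u ≠ ⊤) :
    expGrowthSup u ≤ 0 := by
  have h2 : 2 * expGrowthSup u ≤ expGrowthSup u := by
    rw [← Nat.cast_two, ← hu.expGrowthSup_comp_mul two_ne_zero]
    exact expGrowthSup_le_of_eventually_le hb (Eventually.of_forall h)
  generalize expGrowthSup u = E at h2 htop
  induction E using EReal.rec with
  | bot => exact bot_le
  | coe x =>
    have : 2 * x ≤ x := EReal.coe_le_coe_iff.1 (by rwa [EReal.coe_mul])
    exact EReal.coe_nonpos.2 (by linarith)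
  | top => exact absurd rfl htop

lemma expGrowthSup_mul_add_one_pow_nonpos (a q : ℕ) :
    expGrowthSup (fun n ↦ (((a * n + 1) ^ q : ℕ) : ℝ≥0∞)) ≤ 0 := by
  refine expGrowthSup_nonpos_of_comp_two_mul_le (b := 2 ^ q) (fun m n hmn ↦ ?_) (by simp)
    (fun n ↦ ?_) ?_
  · gcongr
  · have : (a * (2 * n) + 1) ^ q ≤ 2 ^ q * (a * n + 1) ^ q := by
      rw [← mul_pow]; gcongr; nlinarith
    exact_mod_cast this
  · refine ne_top_of_le_ne_top (b := expGrowthSup fun n ↦ (((a + 1) ^ q : ℕ) : ℝ≥0∞) ^ n) ?_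
      (expGrowthSup_monotone fun n ↦ ?_)
    · rw [expGrowthSup_pow]; simp
    · have : (a * n + 1) ^ q ≤ ((a + 1) ^ q) ^ n :=
        calc (a * n + 1) ^ q ≤ ((a + 1) ^ n) ^ q := by
              gcongr
              simpa [add_comm, mul_comm] using
                one_add_le_pow_of_two_add_nonneg (a := a) (by omega) n
          _ = ((a + 1) ^ q) ^ n := by rw [← pow_mul, ← pow_mul, mul_comm]
      exact_mod_cast this

lemma expGrowthSup_le_log_of_le_poly_mul_pow {u : ℕ → ℝ≥0∞} {a q r : ℕ}
    (h : ∀ n, u n ≤ ((a * n + 1) ^ q * r ^ (n + q) : ℕ)) :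
    expGrowthSup u ≤ ENNReal.log r := by
  set p : ℕ → ℝ≥0∞ := fun n ↦ (((a * n + 1) ^ q : ℕ) : ℝ≥0∞)
  have hpow : expGrowthSup (fun n ↦ (r : ℝ≥0∞) ^ n) = ENNReal.log r := expGrowthSup_pow
  calc expGrowthSup u
      ≤ expGrowthSup (p * fun n ↦ (r : ℝ≥0∞) ^ n) := by
        refine expGrowthSup_le_of_eventually_le (b := (r : ℝ≥0∞) ^ q) (by simp)
          (Eventually.of_forall fun n ↦ (h n).trans_eq ?_)
        simp only [p, Pi.mul_apply]; push_cast; ring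
    _ ≤ expGrowthSup p + ENNReal.log r := by
        rw [← hpow]
        exact expGrowthSup_mul_le (.inr (by simp [hpow]))
          (.inl (ne_top_of_le_ne_top EReal.zero_ne_top (expGrowthSup_mul_add_one_pow_nonpos a q)))
    _ ≤ ENNReal.log r := add_le_of_nonpos_left (expGrowthSup_mul_add_one_pow_nonpos a q)

end ExpGrowth

open ExpGrowth

namespace Dynamics

section Wandering

variable {X : Type*} {g : X → X} {W W' : Set X} {x : X}

def IsWandering (g : X → X) (W : Set X) : Prop :=
  ∀ n, 1 ≤ n → Disjoint (g^[n] '' W) W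

lemma IsWandering.mono (h : IsWandering g W) (hW' : W' ⊆ W) : IsWandering g W' :=
  fun n hn ↦ (h n hn).mono (image_mono hW') hW'

lemma IsWandering.iterate_notMem (h : IsWandering g W) {m n : ℕ} (hmn : m < n)
    (hm : g^[m] x ∈ W) : g^[n] x ∉ W := fun hn ↦
  (h (n - m) (by omega)).notMem_of_mem_left
    ⟨g^[m] x, hm, by rw [← Function.iterate_add_apply, Nat.sub_add_cancel hmn.le]⟩ hn

lemma IsWandering.exists_visitTime (h : IsWandering g W) (x : X) (M : ℕ) :
    ∃ v : Fin (M + 1), ∀ t < M, g^[t] x ∈ W ↔ (v : ℕ) = t := by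
  by_cases hx : ∃ t < M, g^[t] x ∈ W
  · obtain ⟨t, htM, ht⟩ := hx
    refine ⟨⟨t, by omega⟩, fun s _ ↦ ⟨fun hs ↦ ?_, fun hs ↦ hs ▸ ht⟩⟩
    by_contra hne
    rcases Nat.lt_or_gt_of_ne hne with hlt | hlt
    · exact h.iterate_notMem hlt ht hs
    · exact h.iterate_notMem hlt hs ht
  · push Not at hx
    exact ⟨Fin.last M, fun t ht ↦ iff_of_false (hx t ht) (by simp; omega)⟩

variable [TopologicalSpace X]

lemma notMem_nonWanderingSet_iff : x ∉ nonWanderingSet g ↔ ∃ W ∈ 𝓝 x, IsWandering g W := by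
  simp only [nonWanderingSet, mem_ofPred_eq, IsWandering, Set.disjoint_iff_inter_eq_empty,
    ← not_nonempty_iff_eq_empty]
  push Not
  rfl

lemma isClosed_nonWanderingSet (g : X → X) : IsClosed (nonWanderingSet g) := by
  refine isOpen_compl_iff.1 <| isOpen_iff_mem_nhds.2 fun x hx ↦ ?_
  obtain ⟨W, hW, hwand⟩ := notMem_nonWanderingSet_iff.1 hx
  exact mem_of_superset (interior_mem_nhds.2 hW) fun y hy ↦
    notMem_nonWanderingSet_iff.2 ⟨W, mem_interior_iff_mem_nhds.1 hy, hwand⟩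

lemma mapsTo_nonWanderingSet (hg : Continuous g) :
    MapsTo g (nonWanderingSet g) (nonWanderingSet g) := by
  intro x hx U hU
  obtain ⟨n, hn, _, ⟨y, hy, rfl⟩, hyU⟩ := hx (g ⁻¹' U) (hg.continuousAt.preimage_mem_nhds hU)
  refine ⟨n, hn, g^[n] (g y), ⟨g y, hy, rfl⟩, ?_⟩
  rwa [← Function.iterate_succ_apply, Function.iterate_succ_apply']

lemma nonWanderingSet_nonempty [CompactSpace X] [Nonempty X] (g : X → X) :
    (nonWanderingSet g).Nonempty := by
  obtain ⟨x⟩ := ‹Nonempty X›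
  obtain ⟨y, -, hy⟩ := isCompact_univ.exists_mapClusterPt (f := atTop) (u := fun n ↦ g^[n] x)
    (by simp)
  refine ⟨y, fun U hU ↦ ?_⟩
  obtain ⟨m, hm⟩ := (mapClusterPt_iff_frequently.1 hy U hU).exists
  obtain ⟨n, hmn, hn⟩ := frequently_atTop.1 (mapClusterPt_iff_frequently.1 hy U hU) (m + 1)
  refine ⟨n - m, by omega, g^[n] x, ⟨g^[m] x, hm, ?_⟩, hn⟩
  rw [← Function.iterate_add_apply, Nat.sub_add_cancel (by omega)]

end Wandering

section BlockTimes

def blockTimes (n : ℕ) (S : Finset ℕ) : ℕ → ℕ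
  | 0 => 0
  | k + 1 => blockTimes n S k + if blockTimes n S k ∈ S then 1 else n

variable {n : ℕ} {S : Finset ℕ}

lemma blockTimes_succ (k : ℕ) :
    blockTimes n S (k + 1) = blockTimes n S k + if blockTimes n S k ∈ S then 1 else n := rfl

lemma blockTimes_strictMono (hn : n ≠ 0) : StrictMono (blockTimes n S) :=
  strictMono_nat_of_lt_succ fun k ↦ by rw [blockTimes_succ]; split_ifs <;> omega

/-- Only the (at most `#S`) steps starting in `S` are shorter than `n`. -/
lemma mul_le_blockTimes (hn : n ≠ 0) (N : ℕ) : n * N ≤ blockTimes n S (N + S.card) := by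
  have key : ∀ k, n * k ≤ blockTimes n S k +
      n * ((Finset.range k).filter (blockTimes n S · ∈ S)).card := by
    intro k
    induction k with
    | zero => simp [blockTimes]
    | succ k ih =>
      rw [blockTimes_succ, Finset.range_add_one, Finset.filter_insert]
      split_ifs with h
      · rw [Finset.card_insert_of_notMem (by simp)]; nlinarith
      · nlinarith
  have hcard : ((Finset.range (N + S.card)).filter (blockTimes n S · ∈ S)).card ≤ S.card :=
    Finset.card_le_card_of_injOn _ (fun k hk ↦ (Finset.mem_filter.1 hk).2)
      (blockTimes_strictMono hn).injective.injOn
  have := key (N + S.card)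
  nlinarith

lemma exists_blockTimes_le_lt (hn : n ≠ 0) {N t : ℕ} (ht : t < n * N) :
    ∃ k < N + S.card, blockTimes n S k ≤ t ∧ t < blockTimes n S (k + 1) := by
  have hτ := blockTimes_strictMono (S := S) hn
  obtain ⟨k, hkt, htk⟩ := hτ.exists_between_of_tendsto_atTop hτ.tendsto_atTop (x := t + 1)
    (by simp [blockTimes])
  refine ⟨k, ?_, by omega, by omega⟩
  by_contra! hk
  have := hτ.monotone hk
  have := mul_le_blockTimes (S := S) hn N
  omega

end BlockTimes

section Covers

variable {X : Type*} {T : X → X} {U : SetRel X X} {x y : X}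

lemma ball_prod_ball_subset_comp {V : SetRel X X} [V.IsSymm] (z : X) :
    ball z V ×ˢ ball z V ⊆ V ○ V :=
  fun _ hp ↦ mem_comp_of_mem_ball hp.1 hp.2

lemma iterate_mem_of_iterate_mem_dynEntourage {s t n : ℕ}
    (h : (T^[s] x, T^[s] y) ∈ dynEntourage T U n) (hst : s ≤ t) (hts : t < s + n) :
    (T^[t] x, T^[t] y) ∈ U := by
  have := mem_dynEntourage.1 h (t - s) (by omega)
  rwa [← Function.iterate_add_apply, ← Function.iterate_add_apply, Nat.sub_add_cancel hst] at this

lemma coverMincard_le_card_of_eq_imp_mem_dynEntourage {α : Type*} [Fintype α] (F : Set X)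
    {n : ℕ} (c : X → α) (hc : ∀ x y, c x = c y → (x, y) ∈ dynEntourage T U n) :
    coverMincard T F U n ≤ Fintype.card α := by
  rcases isEmpty_or_nonempty X with hX | hX
  · simp [Set.eq_empty_of_isEmpty F, coverMincard_empty]
  classical
  refine le_trans (IsDynCoverOf.coverMincard_le_card (s := Finset.univ.image (Function.invFun c))
    fun x _ ↦ ⟨_, Finset.mem_image_of_mem _ (Finset.mem_univ (c x)), ?_⟩) ?_
  · exact hc _ _ (Function.invFun_eq ⟨x, rfl⟩).symm
  · exact_mod_cast Finset.card_image_le.trans_eq Finset.card_univ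

open Fintype in
theorem coverMincard_univ_le_of_isWandering {κ ι : Type*} [Fintype κ] [Nonempty κ] [Fintype ι]
    {g : X → X} {n₀ : ℕ} (hn₀ : n₀ ≠ 0) (B : κ → Set X) (W : ι → Set X)
    (hB : ∀ j, B j ×ˢ B j ⊆ dynEntourage g U n₀) (hW : ∀ i, W i ×ˢ W i ⊆ U)
    (hwand : ∀ i, IsWandering g (W i)) (hcover : (⋃ i, W i)ᶜ ⊆ ⋃ j, B j) (N : ℕ) :
    coverMincard g univ U (n₀ * N) ≤ ((n₀ * N + 1) ^ card ι * card κ ^ (N + card ι) : ℕ) := by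
  classical
  set M := n₀ * N
  choose v hv using fun x i ↦ (hwand i).exists_visitTime x M
  have hlabel : ∀ z, ∃ j, (∃ j', z ∈ B j') → z ∈ B j := fun z ↦
    (em (∃ j, z ∈ B j)).elim (fun ⟨j, hj⟩ ↦ ⟨j, fun _ ↦ hj⟩)
      fun h ↦ ⟨Classical.arbitrary κ, fun h' ↦ (h h').elim⟩
  choose ψ hψ using hlabel
  let S : (ι → Fin (M + 1)) → Finset ℕ := fun w ↦ Finset.univ.image fun i ↦ (w i : ℕ)
  -- A point is known up to `U` on `[0, M)` from its visit times to the `W i` and the names of the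
  -- sets `B j` containing it at the starting times of the blocks.
  let c : X → (ι → Fin (M + 1)) × (Fin (N + card ι) → κ) :=
    fun x ↦ (v x, fun k ↦ ψ (g^[blockTimes n₀ (S (v x)) k] x))
  refine (coverMincard_le_card_of_eq_imp_mem_dynEntourage univ c fun x y hxy ↦ ?_).trans_eq
    (by simp)
  have hvxy : v x = v y := congrArg Prod.fst hxy
  have hψxy (k : Fin (N + card ι)) :
      ψ (g^[blockTimes n₀ (S (v x)) k] x) = ψ (g^[blockTimes n₀ (S (v x)) k] y) := by
    simpa only [c, hvxy] using congrFun (congrArg Prod.snd hxy) k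
  refine mem_dynEntourage.2 fun t ht ↦ ?_
  obtain ⟨k, hk, hkt, htk⟩ := exists_blockTimes_le_lt (S := S (v x)) hn₀ ht
  replace hk : k < N + card ι := hk.trans_le (Nat.add_le_add_left Finset.card_image_le N)
  rw [blockTimes_succ] at htk
  split_ifs at htk with hmem
  · obtain ⟨i, -, hi⟩ := Finset.mem_image.1 hmem
    have hvt : (v x i : ℕ) = t := by omega
    exact hW i ⟨(hv x i t ht).2 hvt, (hv y i t ht).2 (hvxy ▸ hvt)⟩
  · set s := blockTimes n₀ (S (v x)) k
    have hs : s < M := by omega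
    have hBs : ∀ z, v z = v x → ∃ j, g^[s] z ∈ B j := fun z hz ↦ mem_iUnion.1 <| hcover <| by
      simp only [mem_compl_iff, mem_iUnion, not_exists]
      exact fun i h ↦ hmem (Finset.mem_image.2 ⟨i, Finset.mem_univ _, hz ▸ (hv z i s hs).1 h⟩)
    have hx := hψ _ (hBs x rfl)
    have hy := hψ _ (hBs y hvxy.symm)
    rw [← hψxy ⟨k, hk⟩] at hy
    exact iterate_mem_of_iterate_mem_dynEntourage (hB _ ⟨hx, hy⟩) hkt htk

lemma coverEntropyEntourage_le_log_div_of_coverMincard_le {F : Set X} {n₀ q r : ℕ}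
    (hn₀ : n₀ ≠ 0) (h : ∀ N, coverMincard T F U (n₀ * N) ≤ ((n₀ * N + 1) ^ q * r ^ (N + q) : ℕ)) :
    coverEntropyEntourage T F U ≤ ENNReal.log r / n₀ := by
  have hmono : Monotone fun n ↦ (coverMincard T F U n : ℝ≥0∞) :=
    fun m n hmn ↦ ENat.toENNReal_mono (coverMincard_monotone_time T F U hmn)
  rw [EReal.le_div_iff_mul_le (by exact_mod_cast hn₀.bot_lt) (EReal.natCast_ne_top n₀), mul_comm,
    coverEntropyEntourage, ← hmono.expGrowthSup_comp_mul hn₀]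
  exact expGrowthSup_le_log_of_le_poly_mul_pow fun N ↦ by
    simpa using ENat.toENNReal_le.2 (h N)

lemma exists_isDynCoverOf_log_card_div_lt [UniformSpace X] {F : Set X}
    (hF : IsCompact F) (hT : MapsTo T F F) (hU : U ∈ 𝓤 X) {c : EReal}
    (hc : coverEntropyEntourage T F U < c) :
    ∃ n ≠ 0, ∃ s : Finset X, IsDynCoverOf T F U n s ∧ ENNReal.log s.card / n < c := by
  obtain ⟨n, hn, hn₀⟩ := ((eventually_lt_of_limsup_lt hc).and (eventually_ne_atTop 0)).exists
  obtain ⟨s, hs, hcard⟩ := (coverMincard_finite_iff T F U n).1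
    (coverMincard_finite_of_isCompact_invariant hF hT hU n)
  beta_reduce at hn
  exact ⟨n, hn₀, s, hs, by rwa [← hcard] at hn⟩

end Covers

section NonWandering

variable {X : Type*} [UniformSpace X] {g : X → X}

lemma _root_.IsCompact.exists_isWandering_cover {K : Set X} (hK : IsCompact K)
    (hKΩ : Disjoint K (nonWanderingSet g)) {V : SetRel X X} (hV : V ∈ 𝓤 X) :
    ∃ t : Finset X, ∃ W : X → Set X,
      (∀ z ∈ t, IsWandering g (W z) ∧ W z ⊆ ball z V) ∧ K ⊆ ⋃ z ∈ t, W z := by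
  have hW : ∀ z ∈ K, ∃ W ∈ 𝓝 z, IsWandering g W ∧ W ⊆ ball z V := fun z hz ↦ by
    obtain ⟨W, hW, hwand⟩ := notMem_nonWanderingSet_iff.1 (hKΩ.notMem_of_mem_left hz)
    exact ⟨W ∩ ball z V, inter_mem hW (ball_mem_nhds z hV), hwand.mono inter_subset_left,
      inter_subset_right⟩
  choose! W hWz hW using hW
  obtain ⟨t, htK, hKt⟩ := hK.elim_nhds_subcover W hWz
  exact ⟨t, W, fun z hz ↦ hW z (htK z hz), hKt⟩

variable [CompactSpace X]

lemma IsDynCoverOf.exists_coverMincard_univ_le [Nonempty X] (hg : Continuous g)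
    {U V : SetRel X X} (hV : V ∈ 𝓤 X) (hVopen : IsOpen V) [V.IsSymm] (hVU : V ○ V ⊆ U)
    {n₀ : ℕ} (hn₀ : n₀ ≠ 0) {E : Finset X} (hE : IsDynCoverOf g (nonWanderingSet g) V n₀ E) :
    ∃ q, ∀ N, coverMincard g univ U (n₀ * N) ≤ ((n₀ * N + 1) ^ q * E.card ^ (N + q) : ℕ) := by
  set D := dynEntourage g V n₀
  set O := ⋃ y ∈ E, ball y D
  have hO : IsOpen O := isOpen_biUnion fun y _ ↦
    (isOpen.dynEntourage hg hVopen n₀).preimage (continuous_const.prodMk continuous_id)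
  have hΩO : nonWanderingSet g ⊆ O := fun x hx ↦ by
    obtain ⟨y, hy, hxy⟩ := hE hx
    exact mem_biUnion hy (mem_ball_symmetry.1 hxy)
  obtain ⟨t, W, hW, hOt⟩ := hO.isClosed_compl.isCompact.exists_isWandering_cover
    (disjoint_compl_left.mono_right hΩO) hV
  have : Nonempty E := (SetRel.IsCover.nonempty hE (nonWanderingSet_nonempty g)).to_subtype
  refine ⟨t.card, fun N ↦ ?_⟩
  simpa using coverMincard_univ_le_of_isWandering (κ := E) (ι := t) hn₀ (fun y ↦ ball (y : X) D)
    (fun z ↦ W z) (fun y ↦ (ball_prod_ball_subset_comp (y : X)).trans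
      ((dynEntourage_comp_subset g V V n₀).trans (dynEntourage_monotone g n₀ hVU)))
    (fun z ↦ (prod_mono (hW z z.2).2 (hW z z.2).2).trans ((ball_prod_ball_subset_comp _).trans hVU))
    (fun z ↦ (hW z z.2).1) (by simpa [O, iUnion_subtype] using compl_subset_comm.1 hOt) N

theorem coverEntropyEntourage_univ_le_coverEntropy_nonWanderingSet (hg : Continuous g)
    {U : SetRel X X} (hU : U ∈ 𝓤 X) :
    coverEntropyEntourage g univ U ≤ coverEntropy g (nonWanderingSet g) := by
  rcases isEmpty_or_nonempty X with hX | hX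
  · simp [univ_eq_empty_iff.2 hX, coverEntropyEntourage_empty]
  obtain ⟨V, hV, hVopen, hVsymm, hVU⟩ := comp_open_symm_mem_uniformity_sets hU
  refine le_of_forall_gt_imp_ge_of_dense fun c hc ↦ ?_
  obtain ⟨n₀, hn₀, E, hE, hEc⟩ := exists_isDynCoverOf_log_card_div_lt
    (isClosed_nonWanderingSet g).isCompact (mapsTo_nonWanderingSet hg) hV
    ((coverEntropyEntourage_le_coverEntropy g _ hV).trans_lt hc)
  obtain ⟨q, hq⟩ := hE.exists_coverMincard_univ_le hg hV hVopen hVU hn₀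
  exact (coverEntropyEntourage_le_log_div_of_coverMincard_le hn₀ hq).trans hEc.le

end NonWandering

end Dynamics

open Dynamics

/-- The topological entropy of a continuous selfmap of a compact metric space equals
the entropy of its restriction to the nonwandering set. -/
theorem coverEntropy_eq_coverEntropy_nonWanderingSet {X : Type*} [MetricSpace X]
    [CompactSpace X] (g : X → X) (hg : Continuous g) :
    Dynamics.coverEntropy g Set.univ = Dynamics.coverEntropy g (nonWanderingSet g) :=
  le_antisymm
    (iSup₂_le fun _ hU ↦ coverEntropyEntourage_univ_le_coverEntropy_nonWanderingSet hg hU)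
    (coverEntropy_monotone g (subset_univ _))
end

section
/- Let f : [0,1] → [0,1] be a continuous piecewise linear map with constant absolute slope |s| > 1 on each of its finitely many laps. Then the topological entropy of f equals log |s|. -/
/-!
Gluing the laps, `f` is `|s|`-Lipschitz on `[0,1]`, so a grid of mesh `ε |s|⁻ⁿ` is an
`(n, ε)`-dynamical cover, and the entropy is at most `log |s|`.

Conversely, on the cylinder of an itinerary of length `N` through the laps, `f^[N]` is affine with
slope `±|s| ^ N`; so cylinders have length at most `|s|⁻ᴺ`, at least `|s| ^ N` of them have positive
length, and two distinct cylinders share at most one point. Cut an itinerary of length `n * m` into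
`n` blocks of length `m`. If the radius is below half the length of every positive-length
`m`-cylinder, then in each block a dynamical ball meets at most two positive-length `m`-cylinders,
hence at most `2 ^ n` positive-length `(n * m)`-cylinders. So every cover has at least
`(|s| ^ m / 2) ^ n` points, the entropy is at least `log |s| - log 2 / m`, and `m → ∞`.
-/

open Set Filter Dynamics ExpGrowth
open MeasureTheory (volume measure_mono measure_iUnion_fintype_le measure_preimage_add_right)
open scoped NNReal ENNReal Topology

theorem LipschitzOnWith.Icc_union {f : ℝ → ℝ} {K : ℝ≥0} {a b c : ℝ}
    (hab : LipschitzOnWith K f (Icc a b)) (hbc : LipschitzOnWith K f (Icc b c))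
    (h₁ : a ≤ b) (h₂ : b ≤ c) : LipschitzOnWith K f (Icc a c) := by
  have key : ∀ x ∈ Icc a c, ∀ y ∈ Icc a c, x ≤ y → dist (f x) (f y) ≤ K * dist x y := by
    intro x hx y hy hxy
    rcases le_total y b with hyb | hby
    · exact hab.dist_le_mul x ⟨hx.1, hxy.trans hyb⟩ y ⟨hy.1, hyb⟩
    rcases le_total b x with hbx | hxb
    · exact hbc.dist_le_mul x ⟨hbx, hx.2⟩ y ⟨hby, hy.2⟩
    calc dist (f x) (f y) ≤ dist (f x) (f b) + dist (f b) (f y) := dist_triangle _ _ _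
      _ ≤ K * dist x b + K * dist b y :=
          add_le_add (hab.dist_le_mul x ⟨hx.1, hxb⟩ b ⟨h₁, le_rfl⟩)
            (hbc.dist_le_mul b ⟨le_rfl, h₂⟩ y ⟨hby, hy.2⟩)
      _ = K * dist x y := by
          rw [Real.dist_eq, Real.dist_eq, Real.dist_eq, abs_of_nonpos (by linarith),
            abs_of_nonpos (by linarith), abs_of_nonpos (by linarith)]
          ring
  refine LipschitzOnWith.of_dist_le_mul fun x hx y hy => ?_
  rcases le_total x y with h | h
  · exact key x hx y hy h
  · rw [dist_comm, dist_comm x]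
    exact key y hy x hx h

theorem LipschitzOnWith.iterate {α : Type*} [PseudoEMetricSpace α] {f : α → α} {K : ℝ≥0}
    {s : Set α} (hf : LipschitzOnWith K f s) (hs : MapsTo f s s) :
    ∀ n, LipschitzOnWith (K ^ n) f^[n] s
  | 0 => by simpa using LipschitzWith.id.lipschitzOnWith
  | n + 1 => by
    rw [pow_succ, Function.iterate_succ]
    exact (hf.iterate hs n).comp hf hs

theorem isDynCoverOf_Icc_grid {f : ℝ → ℝ} {K : ℝ≥0} (hmaps : MapsTo f (Icc 0 1) (Icc 0 1))
    (hf : LipschitzOnWith K f (Icc 0 1)) (hK : 1 ≤ K) {ε : ℝ} {n N : ℕ}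
    (hN : (K : ℝ) ^ n < ε * N) :
    IsDynCoverOf f (Icc 0 1) {p | dist p.1 p.2 < ε} n
      ((Finset.range (N + 1)).image fun i : ℕ => (i : ℝ) / N) := by
  have hN0 : (0 : ℝ) < N := by
    rcases Nat.eq_zero_or_pos N with rfl | hN0
    · rw [Nat.cast_zero, mul_zero] at hN
      exact absurd hN (not_lt.2 (by positivity))
    · exact_mod_cast hN0
  intro y hy
  set i := ⌊y * N⌋₊
  have hi : (i : ℝ) ≤ y * N := Nat.floor_le (by have := hy.1; positivity)
  have hi' : y * N < i + 1 := Nat.lt_floor_add_one _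
  have hiN : i ≤ N := Nat.floor_le_of_le (by nlinarith [hy.2])
  have hx : (i : ℝ) / N ∈ Icc (0 : ℝ) 1 :=
    ⟨by positivity, (div_le_one hN0).2 (by exact_mod_cast hiN)⟩
  have hxy : dist ((i : ℝ) / N) y < 1 / N := by
    rw [Real.dist_eq, abs_sub_comm, abs_of_nonneg (by rw [sub_nonneg, div_le_iff₀ hN0]; exact hi),
      sub_lt_iff_lt_add', ← add_div, lt_div_iff₀ hN0]
    exact hi'
  refine ⟨(i : ℝ) / N, Finset.mem_coe.2 (Finset.mem_image_of_mem (fun i : ℕ => (i : ℝ) / N)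
    (Finset.mem_range.2 (Nat.lt_succ_of_le hiN))), mem_dynEntourage.2 fun j hj => ?_⟩
  change dist _ _ < ε
  rw [dist_comm]
  calc dist (f^[j] (i / N)) (f^[j] y) ≤ K ^ j * dist ((i : ℝ) / N) y := by
        simpa using (hf.iterate hmaps j).dist_le_mul _ hx y hy
    _ ≤ K ^ n * dist ((i : ℝ) / N) y := by
        gcongr
    _ < K ^ n * (1 / N) := by gcongr
    _ < ε := by rw [mul_one_div, div_lt_iff₀ hN0]; exact hN

theorem coverMincard_Icc_le {f : ℝ → ℝ} {K : ℝ≥0} (hmaps : MapsTo f (Icc 0 1) (Icc 0 1))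
    (hf : LipschitzOnWith K f (Icc 0 1)) (hK : 1 ≤ K) {ε : ℝ} (hε : 0 < ε) (n : ℕ) :
    (coverMincard f (Icc 0 1) {p | dist p.1 p.2 < ε} n : ℝ≥0∞) ≤
      ENNReal.ofReal (1 / ε + 2) * (K : ℝ≥0∞) ^ n := by
  set N := ⌊(K : ℝ) ^ n / ε⌋₊ + 1
  have hN : (K : ℝ) ^ n < ε * N := by
    rw [← div_lt_iff₀' hε]
    exact_mod_cast Nat.lt_floor_add_one _
  have hKn : (1 : ℝ) ≤ (K : ℝ) ^ n := one_le_pow₀ (by exact_mod_cast hK)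
  have hcard : (((Finset.range (N + 1)).image fun i : ℕ => (i : ℝ) / N).card : ℝ) ≤
      (1 / ε + 2) * (K : ℝ) ^ n := by
    calc _ ≤ ((N + 1 : ℕ) : ℝ) := by
          exact_mod_cast Finset.card_image_le.trans (Finset.card_range _).le
      _ ≤ (K : ℝ) ^ n / ε + 2 := by
          simp only [N]
          push_cast
          linarith [Nat.floor_le (show 0 ≤ (K : ℝ) ^ n / ε by positivity)]
      _ ≤ (1 / ε + 2) * (K : ℝ) ^ n := by
          rw [add_mul, one_div_mul_eq_div]
          linarith
  calc (coverMincard f (Icc 0 1) {p | dist p.1 p.2 < ε} n : ℝ≥0∞)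
      ≤ (((Finset.range (N + 1)).image fun i : ℕ => (i : ℝ) / N).card : ℝ≥0∞) := by
        exact_mod_cast (isDynCoverOf_Icc_grid hmaps hf hK hN).coverMincard_le_card
    _ ≤ ENNReal.ofReal ((1 / ε + 2) * (K : ℝ) ^ n) := by
        rw [← ENNReal.ofReal_natCast]
        exact ENNReal.ofReal_le_ofReal hcard
    _ = ENNReal.ofReal (1 / ε + 2) * (K : ℝ≥0∞) ^ n := by
        rw [ENNReal.ofReal_mul (by positivity), ← NNReal.coe_pow, ENNReal.ofReal_coe_nnreal]
        push_cast; rfl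

theorem coverEntropy_Icc_le_log {f : ℝ → ℝ} {K : ℝ≥0} (hmaps : MapsTo f (Icc 0 1) (Icc 0 1))
    (hf : LipschitzOnWith K f (Icc 0 1)) (hK : 1 ≤ K) :
    coverEntropy f (Icc 0 1) ≤ Real.log K := by
  rw [coverEntropy_eq_iSup_basis Metric.uniformity_basis_dist]
  refine iSup₂_le fun ε hε => ?_
  calc coverEntropyEntourage f (Icc 0 1) {p | dist p.1 p.2 < ε}
      ≤ expGrowthSup fun n => (K : ℝ≥0∞) ^ n :=
        expGrowthSup_le_of_eventually_le ENNReal.ofReal_ne_top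
          (Eventually.of_forall (coverMincard_Icc_le hmaps hf hK hε))
    _ = Real.log K := by
        rw [expGrowthSup_pow, ← ENNReal.ofReal_coe_nnreal,
          ENNReal.log_ofReal_of_pos (zero_lt_one.trans_le (by exact_mod_cast hK))]

theorem exists_pos_forall_ofReal_lt {ι : Type*} (S : Finset ι) {μ : ι → ℝ≥0∞}
    (h : ∀ i ∈ S, 0 < μ i) : ∃ r > 0, ∀ i ∈ S, ENNReal.ofReal r < μ i := by
  have hlim : Tendsto ENNReal.ofReal (𝓝[>] 0) (𝓝 0) := by
    simpa using (ENNReal.continuous_ofReal.tendsto 0).mono_left nhdsWithin_le_nhds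
  exact ((eventually_mem_nhdsWithin (a := (0 : ℝ)) (s := Ioi 0)).and ((eventually_all_finset S).2
    fun i hi => hlim.eventually (gt_mem_nhds (h i hi)))).exists

theorem card_le_two_of_ordConnected {ι : Type*} (S : Finset ι) (J : ι → Set ℝ) {a b : ℝ}
    (hJ : ∀ i ∈ S, (J i).OrdConnected)
    (hinter : (S : Set ι).Pairwise fun i j => (J i ∩ J j).Subsingleton)
    (hmeet : ∀ i ∈ S, (J i ∩ Ioo a b).Nonempty) (hout : ∀ i ∈ S, ¬J i ⊆ Icc a b) :
    S.card ≤ 2 := by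
  classical
  have hend : ∀ i ∈ S, a ∈ J i ∨ b ∈ J i := by
    intro i hi
    obtain ⟨q, hqJ, hq⟩ := hmeet i hi
    obtain ⟨p, hpJ, hp⟩ := not_subset.1 (hout i hi)
    rcases lt_or_ge p a with hpa | hap
    · exact Or.inl ((hJ i hi).out hpJ hqJ ⟨hpa.le, hq.1.le⟩)
    · have hbp : b < p := lt_of_not_ge fun hpb => hp ⟨hap, hpb⟩
      exact Or.inr ((hJ i hi).out hqJ hpJ ⟨hq.2.le, hbp.le⟩)
  -- Two sets containing the same endpoint would share a nondegenerate interval.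
  refine (Finset.card_le_card_of_injOn (fun i => decide (a ∈ J i)) (t := Finset.univ)
    (fun _ _ => Finset.mem_coe.2 (Finset.mem_univ _)) ?_).trans_eq rfl
  intro i hi j hj hij
  by_contra hne
  obtain ⟨qi, hqi, hqi'⟩ := hmeet i hi
  obtain ⟨qj, hqj, hqj'⟩ := hmeet j hj
  by_cases ha : a ∈ J i
  · have ha' : a ∈ J j := by simpa [ha] using hij
    have hmin : min qi qj ∈ J i ∩ J j :=
      ⟨(hJ i hi).out ha hqi ⟨(lt_min hqi'.1 hqj'.1).le, min_le_left _ _⟩,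
        (hJ j hj).out ha' hqj ⟨(lt_min hqi'.1 hqj'.1).le, min_le_right _ _⟩⟩
    exact (lt_min hqi'.1 hqj'.1).ne (hinter hi hj hne ⟨ha, ha'⟩ hmin)
  · have ha' : a ∉ J j := by simpa [ha] using hij
    have hb := (hend i hi).resolve_left ha
    have hb' := (hend j hj).resolve_left ha'
    have hmax : max qi qj ∈ J i ∩ J j :=
      ⟨(hJ i hi).out hqi hb ⟨le_max_left _ _, (max_lt hqi'.2 hqj'.2).le⟩,
        (hJ j hj).out hqj hb' ⟨le_max_right _ _, (max_lt hqi'.2 hqj'.2).le⟩⟩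
    exact (max_lt hqi'.2 hqj'.2).ne (hinter hi hj hne hmax ⟨hb, hb'⟩)

theorem volume_le_of_subset_affine_preimage {S T : Set ℝ} {A B : ℝ} (hA : A ≠ 0)
    (h : S ⊆ (fun x => A * x + B) ⁻¹' T) :
    volume S ≤ ENNReal.ofReal |A⁻¹| * volume T := by
  calc volume S ≤ volume ((fun x => A * x) ⁻¹' ((fun y => y + B) ⁻¹' T)) := measure_mono h
    _ = ENNReal.ofReal |A⁻¹| * volume T := by
        rw [Real.volume_preimage_mul_left hA, measure_preimage_add_right]

theorem Set.OrdConnected.preimage_affine {T : Set ℝ} (hT : T.OrdConnected) (A B : ℝ) :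
    ((fun x => A * x + B) ⁻¹' T).OrdConnected := by
  rcases le_total 0 A with hA | hA
  · exact hT.preimage_mono fun x y hxy => by nlinarith
  · exact hT.preimage_anti fun x y hxy => by nlinarith

def lap (t : ℕ → ℝ) (i : ℕ) : Set ℝ := Icc (t i) (t (i + 1))

section Laps

variable {t : ℕ → ℝ} {k : ℕ}

theorem monotoneOn_Iic_of_lt_succ (htmono : ∀ i < k, t i < t (i + 1)) : MonotoneOn t (Iic k) :=
  (strictMonoOn_Iic_of_lt_succ (by simpa using htmono)).monotoneOn

theorem lap_inter_subsingleton (htmono : ∀ i < k, t i < t (i + 1)) {i j : ℕ} (hi : i < k)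
    (hj : j < k) (hij : i ≠ j) : (lap t i ∩ lap t j).Subsingleton := by
  wlog h : i < j generalizing i j
  · exact inter_comm (lap t i) _ ▸ this hj hi hij.symm (by omega)
  have hle : t (i + 1) ≤ t j :=
    monotoneOn_Iic_of_lt_succ htmono (mem_Iic.2 (by omega)) (mem_Iic.2 hj.le) h
  intro x hx y hy
  have hx' : x = t j := le_antisymm (hx.1.2.trans hle) hx.2.1
  have hy' : y = t j := le_antisymm (hy.1.2.trans hle) hy.2.1
  rw [hx', hy']

theorem exists_lap (ht0 : t 0 = 0) (htk : t k = 1) (hk : 1 ≤ k) {y : ℝ} (hy : y ∈ Icc 0 1) :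
    ∃ i < k, y ∈ lap t i := by
  classical
  set i := Nat.findGreatest (fun i => t i ≤ y) (k - 1)
  have hti : t i ≤ y := Nat.findGreatest_spec (P := fun i => t i ≤ y) (Nat.zero_le _) (ht0 ▸ hy.1)
  have hik : i ≤ k - 1 := Nat.findGreatest_le _
  refine ⟨i, by omega, hti, ?_⟩
  rcases Nat.lt_or_ge i (k - 1) with h | h
  · exact (not_le.1 (Nat.findGreatest_is_greatest (P := fun i => t i ≤ y) (Nat.lt_succ_self i) h)).le
  · rw [show i + 1 = k by omega, htk]
    exact hy.2

end Laps

def cylinder (f : ℝ → ℝ) (t : ℕ → ℝ) {k N : ℕ} (v : Fin N → Fin k) : Set ℝ :=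
  {x ∈ Icc 0 1 | ∀ j, f^[j] x ∈ lap t (v j)}

open Classical in
noncomputable def admissibleWords (f : ℝ → ℝ) (t : ℕ → ℝ) (k N : ℕ) : Finset (Fin N → Fin k) :=
  {v | 0 < volume (cylinder f t v)}

def blocks {k m n : ℕ} (v : Fin (n * m) → Fin k) (j : Fin n) : Fin m → Fin k :=
  fun i => v (finProdFinEquiv (j, i))

theorem blocks_injective {k m n : ℕ} : Function.Injective (blocks (k := k) (m := m) (n := n)) := by
  intro v w h
  funext a
  obtain ⟨⟨j, i⟩, rfl⟩ := finProdFinEquiv.surjective a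
  exact congrFun (congrFun h j) i

theorem cylinder_succ {f : ℝ → ℝ} {t : ℕ → ℝ} {k N : ℕ} (v : Fin (N + 1) → Fin k) :
    cylinder f t v = cylinder f t (Fin.init v) ∩ {x | f^[N] x ∈ lap t (v (Fin.last N))} := by
  ext x
  simp only [cylinder, Fin.forall_fin_succ', Fin.init, Fin.val_castSucc, Fin.val_last,
    mem_inter_iff, mem_ofPred_eq, and_assoc]

structure ConstSlopeLaps (f : ℝ → ℝ) (s : ℝ) (k : ℕ) (t : ℕ → ℝ) : Prop where
  one_le : 1 ≤ k
  t_zero : t 0 = 0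
  t_last : t k = 1
  t_lt_succ : ∀ i < k, t i < t (i + 1)
  mapsTo : MapsTo f (Icc 0 1) (Icc 0 1)
  affine : ∀ i < k, ∃ m q : ℝ, (m = s ∨ m = -s) ∧ ∀ x ∈ lap t i, f x = m * x + q

namespace ConstSlopeLaps

variable {f : ℝ → ℝ} {s : ℝ} {k : ℕ} {t : ℕ → ℝ}

theorem exists_affine_on_lap (hf : ConstSlopeLaps f s k t) {i : ℕ} (hi : i < k) :
    ∃ m q : ℝ, |m| = |s| ∧ ∀ x ∈ lap t i, f x = m * x + q := by
  obtain ⟨m, q, hm, hfq⟩ := hf.affine i hi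
  exact ⟨m, q, by rcases hm with rfl | rfl <;> simp, hfq⟩

theorem lipschitzOnWith_lap (hf : ConstSlopeLaps f s k t) {i : ℕ} (hi : i < k) :
    LipschitzOnWith ‖s‖₊ f (lap t i) := by
  obtain ⟨m, q, hm, hfq⟩ := hf.exists_affine_on_lap hi
  refine LipschitzOnWith.of_dist_le_mul fun x hx y hy => le_of_eq ?_
  rw [hfq x hx, hfq y hy, Real.dist_eq, Real.dist_eq, coe_nnnorm, Real.norm_eq_abs, ← hm,
    ← abs_mul]
  ring_nf

theorem lipschitzOnWith (hf : ConstSlopeLaps f s k t) : LipschitzOnWith ‖s‖₊ f (Icc 0 1) := by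
  have hmono := monotoneOn_Iic_of_lt_succ hf.t_lt_succ
  have hinit : ∀ n, n + 1 ≤ k → LipschitzOnWith ‖s‖₊ f (Icc (t 0) (t (n + 1))) := by
    intro n
    induction n with
    | zero => exact fun h => hf.lipschitzOnWith_lap h
    | succ n ih =>
      intro h
      exact (ih (by omega)).Icc_union (hf.lipschitzOnWith_lap h)
        (hmono (mem_Iic.2 (Nat.zero_le k)) (mem_Iic.2 (by omega)) (Nat.zero_le _))
        (hf.t_lt_succ _ h).le
  have := hinit (k - 1) (Nat.sub_add_cancel hf.one_le).le
  rwa [Nat.sub_add_cancel hf.one_le, hf.t_zero, hf.t_last] at this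

theorem exists_affine_iterate (hf : ConstSlopeLaps f s k t) {N : ℕ} (v : Fin N → Fin k) :
    ∀ r ≤ N, ∃ A B : ℝ, |A| = |s| ^ r ∧ ∀ x ∈ cylinder f t v, f^[r] x = A * x + B
  | 0, _ => ⟨1, 0, by simp, fun x _ => by simp⟩
  | r + 1, hr => by
    obtain ⟨A, B, hA, hAB⟩ := hf.exists_affine_iterate v r (by omega)
    obtain ⟨m, q, hm, hfq⟩ := hf.exists_affine_on_lap (v ⟨r, hr⟩).2
    refine ⟨m * A, m * B + q, by rw [abs_mul, hm, hA, pow_succ'], fun x hx => ?_⟩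
    rw [Function.iterate_succ_apply', hfq _ (hAB x hx ▸ hx.2 ⟨r, hr⟩), hAB x hx]
    ring

theorem ordConnected_cylinder (hf : ConstSlopeLaps f s k t) :
    ∀ {N : ℕ} (v : Fin N → Fin k), (cylinder f t v).OrdConnected
  | 0, v => by
    rw [show cylinder f t v = Icc 0 1 by ext; simp [cylinder]]
    exact ordConnected_Icc
  | N + 1, v => by
    obtain ⟨A, B, -, hAB⟩ := hf.exists_affine_iterate (Fin.init v) N le_rfl
    have : cylinder f t v =
        cylinder f t (Fin.init v) ∩ (fun x => A * x + B) ⁻¹' lap t (v (Fin.last N)) := by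
      rw [cylinder_succ]
      ext x
      simp only [mem_inter_iff, mem_ofPred_eq, mem_preimage]
      exact and_congr_right fun hx => by rw [hAB x hx]
    rw [this]
    exact (hf.ordConnected_cylinder _).inter (ordConnected_Icc.preimage_affine A B)

theorem volume_cylinder_le (hf : ConstSlopeLaps f s k t) (hs : s ≠ 0) {N : ℕ}
    (v : Fin N → Fin k) : volume (cylinder f t v) ≤ ENNReal.ofReal (|s| ^ N)⁻¹ := by
  obtain ⟨A, B, hA, hAB⟩ := hf.exists_affine_iterate v N le_rfl
  have hA0 : A ≠ 0 := abs_ne_zero.1 (hA ▸ pow_ne_zero _ (abs_ne_zero.2 hs))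
  have hsub : cylinder f t v ⊆ (fun x => A * x + B) ⁻¹' Icc 0 1 := fun x hx => by
    rw [mem_preimage, ← hAB x hx]
    exact hf.mapsTo.iterate N hx.1
  calc volume (cylinder f t v) ≤ ENNReal.ofReal |A⁻¹| * volume (Icc (0 : ℝ) 1) :=
        volume_le_of_subset_affine_preimage hA0 hsub
    _ = ENNReal.ofReal (|s| ^ N)⁻¹ := by rw [Real.volume_Icc, abs_inv, hA]; simp

theorem Icc_subset_iUnion_cylinder (hf : ConstSlopeLaps f s k t) (N : ℕ) :
    Icc 0 1 ⊆ ⋃ v : Fin N → Fin k, cylinder f t v := by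
  intro x hx
  have : ∀ j : Fin N, ∃ i < k, f^[j] x ∈ lap t i := fun j =>
    exists_lap hf.t_zero hf.t_last hf.one_le (hf.mapsTo.iterate j hx)
  choose i hi hxi using this
  exact mem_iUnion.2 ⟨fun j => ⟨i j, hi j⟩, hx, hxi⟩

theorem pow_le_card_admissibleWords (hf : ConstSlopeLaps f s k t) (hs : s ≠ 0) (N : ℕ) :
    |s| ^ N ≤ (admissibleWords f t k N).card := by
  classical
  have hsN : 0 < |s| ^ N := pow_pos (abs_pos.2 hs) N
  have hcover : (1 : ℝ≥0∞) ≤ (admissibleWords f t k N).card * ENNReal.ofReal (|s| ^ N)⁻¹ :=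
    calc (1 : ℝ≥0∞) = volume (Icc (0 : ℝ) 1) := by simp
      _ ≤ ∑ v : Fin N → Fin k, volume (cylinder f t v) :=
          (measure_mono (hf.Icc_subset_iUnion_cylinder N)).trans (measure_iUnion_fintype_le _ _)
      _ = ∑ v ∈ admissibleWords f t k N, volume (cylinder f t v) := by
          rw [admissibleWords, Finset.sum_filter_of_ne]
          exact fun v _ hv => pos_iff_ne_zero.2 hv
      _ ≤ _ := by
          rw [← nsmul_eq_mul]
          exact Finset.sum_le_card_nsmul _ _ _ fun v _ => hf.volume_cylinder_le hs v
  have : ENNReal.ofReal (|s| ^ N) ≤ (admissibleWords f t k N).card := by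
    calc ENNReal.ofReal (|s| ^ N)
        ≤ ENNReal.ofReal (|s| ^ N) * ((admissibleWords f t k N).card *
            ENNReal.ofReal (|s| ^ N)⁻¹) := le_mul_of_one_le_right' hcover
      _ = (admissibleWords f t k N).card := by
          rw [mul_left_comm, ← ENNReal.ofReal_mul hsN.le, mul_inv_cancel₀ hsN.ne',
            ENNReal.ofReal_one, mul_one]
  rwa [← ENNReal.ofReal_natCast, ENNReal.ofReal_le_ofReal_iff (Nat.cast_nonneg _)] at this

theorem cylinder_inter_subsingleton (hf : ConstSlopeLaps f s k t) (hs : s ≠ 0) {N : ℕ}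
    {v w : Fin N → Fin k} (hvw : v ≠ w) : (cylinder f t v ∩ cylinder f t w).Subsingleton := by
  obtain ⟨j, hj⟩ := Function.ne_iff.1 hvw
  obtain ⟨A, B, hA, hAB⟩ := hf.exists_affine_iterate v j j.2.le
  have hA0 : A ≠ 0 := abs_ne_zero.1 (hA ▸ pow_ne_zero _ (abs_ne_zero.2 hs))
  intro x hx y hy
  have hlap := lap_inter_subsingleton hf.t_lt_succ (v j).2 (w j).2 (Fin.val_injective.ne hj)
    ⟨hx.1.2 j, hx.2.2 j⟩ ⟨hy.1.2 j, hy.2.2 j⟩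
  rw [hAB x hx.1, hAB y hy.1] at hlap
  exact mul_left_cancel₀ hA0 (add_right_cancel hlap)

theorem mapsTo_iterate_cylinder_blocks (hf : ConstSlopeLaps f s k t) {m n : ℕ}
    (v : Fin (n * m) → Fin k) (j : Fin n) :
    MapsTo f^[m * j] (cylinder f t v) (cylinder f t (blocks v j)) := fun x hx =>
  ⟨hf.mapsTo.iterate _ hx.1, fun i => by
    rw [← Function.iterate_add_apply]
    simpa [blocks, finProdFinEquiv_apply_val] using hx.2 (finProdFinEquiv (j, i))⟩

theorem volume_cylinder_blocks_pos (hf : ConstSlopeLaps f s k t) (hs : s ≠ 0) {m n : ℕ}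
    {v : Fin (n * m) → Fin k} (hv : 0 < volume (cylinder f t v)) (j : Fin n) :
    0 < volume (cylinder f t (blocks v j)) := by
  have hjm : m * j ≤ n * m := by nlinarith [j.2]
  obtain ⟨A, B, hA, hAB⟩ := hf.exists_affine_iterate v (m * j) hjm
  have hA0 : A ≠ 0 := abs_ne_zero.1 (hA ▸ pow_ne_zero _ (abs_ne_zero.2 hs))
  have hle := volume_le_of_subset_affine_preimage (B := B) hA0 fun x hx => by
    rw [mem_preimage, ← hAB x hx]
    exact hf.mapsTo_iterate_cylinder_blocks v j hx
  refine pos_iff_ne_zero.2 fun h0 => ?_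
  rw [h0, mul_zero] at hle
  exact hv.ne' (nonpos_iff_eq_zero.1 hle)

open Classical in
theorem card_admissible_meeting_ball_le_two (hf : ConstSlopeLaps f s k t) (hs : s ≠ 0)
    {m : ℕ} {ρ : ℝ}
    (hρ : ∀ b ∈ admissibleWords f t k m, ENNReal.ofReal (2 * ρ) < volume (cylinder f t b))
    (z : ℝ) :
    ((admissibleWords f t k m).filter
      fun b => (cylinder f t b ∩ Metric.ball z ρ).Nonempty).card ≤ 2 := by
  refine card_le_two_of_ordConnected _ (fun b => cylinder f t b) (a := z - ρ) (b := z + ρ)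
    (fun b _ => hf.ordConnected_cylinder b) (fun b _ c _ hbc => hf.cylinder_inter_subsingleton hs hbc)
    (fun b hb => by simpa [Real.ball_eq_Ioo] using (Finset.mem_filter.1 hb).2) fun b hb hsub => ?_
  have hvol := hρ b (Finset.mem_filter.1 hb).1
  rw [← show volume (Icc (z - ρ) (z + ρ)) = ENNReal.ofReal (2 * ρ) by
    rw [Real.volume_Icc]; ring_nf] at hvol
  exact (measure_mono hsub).not_gt hvol

open Classical in
theorem card_admissible_meeting_dynBall_le (hf : ConstSlopeLaps f s k t) (hs : s ≠ 0)
    {m : ℕ} (hm : 0 < m) {ρ : ℝ}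
    (hρ : ∀ b ∈ admissibleWords f t k m, ENNReal.ofReal (2 * ρ) < volume (cylinder f t b))
    (n : ℕ) (x : ℝ) :
    ((admissibleWords f t k (n * m)).filter fun v => ∃ y ∈ cylinder f t v,
      (y, x) ∈ dynEntourage f {p | dist p.1 p.2 < ρ} (n * m)).card ≤ 2 ^ n := by
  set B : Fin n → Finset (Fin m → Fin k) := fun j => (admissibleWords f t k m).filter
    fun b => (cylinder f t b ∩ Metric.ball (f^[m * j] x) ρ).Nonempty
  calc _ ≤ (Fintype.piFinset B).card := by
        refine Finset.card_le_card_of_injOn blocks (fun v hv => ?_) blocks_injective.injOn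
        obtain ⟨hv, y, hy, hyx⟩ := Finset.mem_filter.1 hv
        refine Fintype.mem_piFinset.2 fun j => Finset.mem_filter.2
          ⟨Finset.mem_filter.2 ⟨Finset.mem_univ _,
            hf.volume_cylinder_blocks_pos hs (Finset.mem_filter.1 hv).2 j⟩,
          f^[m * j] y, hf.mapsTo_iterate_cylinder_blocks v j hy, ?_⟩
        exact mem_dynEntourage.1 hyx _ (by nlinarith [j.2])
    _ = ∏ j, (B j).card := Fintype.card_piFinset B
    _ ≤ ∏ _j : Fin n, 2 := Finset.prod_le_prod' fun j _ =>
        hf.card_admissible_meeting_ball_le_two hs hρ _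
    _ = 2 ^ n := by simp

theorem card_admissibleWords_le (hf : ConstSlopeLaps f s k t) (hs : s ≠ 0) {m : ℕ} (hm : 0 < m)
    {ρ : ℝ}
    (hρ : ∀ b ∈ admissibleWords f t k m, ENNReal.ofReal (2 * ρ) < volume (cylinder f t b))
    {n : ℕ} {S : Finset ℝ} (hS : IsDynCoverOf f (Icc 0 1) {p | dist p.1 p.2 < ρ} (n * m) S) :
    (admissibleWords f t k (n * m)).card ≤ S.card * 2 ^ n := by
  classical
  calc (admissibleWords f t k (n * m)).card
      ≤ (S.biUnion fun x => (admissibleWords f t k (n * m)).filter fun v =>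
          ∃ y ∈ cylinder f t v, (y, x) ∈ dynEntourage f {p | dist p.1 p.2 < ρ} (n * m)).card := by
        refine Finset.card_le_card fun v hv => ?_
        obtain ⟨y, hy⟩ := MeasureTheory.nonempty_of_measure_ne_zero (Finset.mem_filter.1 hv).2.ne'
        obtain ⟨x, hxS, hyx⟩ := hS hy.1
        exact Finset.mem_biUnion.2 ⟨x, hxS, Finset.mem_filter.2 ⟨hv, y, hy, hyx⟩⟩
    _ ≤ ∑ x ∈ S, 2 ^ n := Finset.card_biUnion_le.trans
        (Finset.sum_le_sum fun x _ => hf.card_admissible_meeting_dynBall_le hs hm hρ n x)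
    _ = S.card * 2 ^ n := by rw [Finset.sum_const, smul_eq_mul]

theorem pow_le_coverMincard (hf : ConstSlopeLaps f s k t) (hs : s ≠ 0) {m : ℕ} (hm : 0 < m)
    {ρ : ℝ}
    (hρ : ∀ b ∈ admissibleWords f t k m, ENNReal.ofReal (2 * ρ) < volume (cylinder f t b))
    (n : ℕ) :
    ENNReal.ofReal (|s| ^ m / 2) ^ n ≤ coverMincard f (Icc 0 1) {p | dist p.1 p.2 < ρ} (n * m) := by
  rcases eq_top_or_lt_top (coverMincard f (Icc 0 1) {p | dist p.1 p.2 < ρ} (n * m)) with h | h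
  · rw [h, ENat.toENNReal_top]
    exact le_top
  obtain ⟨S, hS, hcard⟩ := (coverMincard_finite_iff _ _ _ _).1 h
  have hcount : |s| ^ (n * m) ≤ S.card * 2 ^ n := by
    exact_mod_cast (hf.pow_le_card_admissibleWords hs (n * m)).trans
      (by exact_mod_cast hf.card_admissibleWords_le hs hm hρ hS)
  rw [← hcard, ENat.toENNReal_coe, ← ENNReal.ofReal_pow (by positivity), ← ENNReal.ofReal_natCast]
  refine ENNReal.ofReal_le_ofReal ?_
  rwa [div_pow, div_le_iff₀ (by positivity), ← pow_mul, mul_comm m n]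

theorem natCast_mul_log_sub_log_two_le (hf : ConstSlopeLaps f s k t) (hs : s ≠ 0) {m : ℕ}
    (hm : 0 < m) :
    ((m * Real.log |s| - Real.log 2 : ℝ) : EReal) ≤ m * coverEntropy f (Icc 0 1) := by
  obtain ⟨r, hr, hrS⟩ := exists_pos_forall_ofReal_lt (admissibleWords f t k m)
    fun b hb => (Finset.mem_filter.1 hb).2
  have hρ : ∀ b ∈ admissibleWords f t k m,
      ENNReal.ofReal (2 * (r / 2)) < volume (cylinder f t b) := by
    simpa [mul_div_cancel₀] using hrS
  set U := {p : ℝ × ℝ | dist p.1 p.2 < r / 2}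
  have hmono : Monotone fun n => (coverMincard f (Icc 0 1) U n : ℝ≥0∞) :=
    fun a b hab => ENat.toENNReal_mono (coverMincard_monotone_time _ _ _ hab)
  calc ((m * Real.log |s| - Real.log 2 : ℝ) : EReal)
      = ENNReal.log (ENNReal.ofReal (|s| ^ m / 2)) := by
        rw [ENNReal.log_ofReal_of_pos (by positivity), Real.log_div (by positivity) two_ne_zero,
          Real.log_pow]
    _ = expGrowthSup fun n => ENNReal.ofReal (|s| ^ m / 2) ^ n := expGrowthSup_pow.symm
    _ ≤ expGrowthSup fun n => (coverMincard f (Icc 0 1) U (m * n) : ℝ≥0∞) :=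
        expGrowthSup_monotone fun n => by
          simpa [mul_comm m n] using hf.pow_le_coverMincard hs hm hρ n
    _ = m * coverEntropyEntourage f (Icc 0 1) U := hmono.expGrowthSup_comp_mul hm.ne'
    _ ≤ m * coverEntropy f (Icc 0 1) := mul_le_mul_of_nonneg_left
        (coverEntropyEntourage_le_coverEntropy f _ (Metric.dist_mem_uniformity (by positivity)))
        (by positivity)

theorem log_le_coverEntropy (hf : ConstSlopeLaps f s k t) (hs : s ≠ 0) :
    (Real.log |s| : EReal) ≤ coverEntropy f (Icc 0 1) := by
  have h : ∀ m : ℕ, 1 ≤ m →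
      ((Real.log |s| - Real.log 2 / m : ℝ) : EReal) ≤ coverEntropy f (Icc 0 1) := by
    intro m hm
    have hm' : (0 : ℝ) < m := by exact_mod_cast hm
    rw [show Real.log |s| - Real.log 2 / m = (m * Real.log |s| - Real.log 2) / m by
        field_simp, EReal.coe_div, EReal.coe_coe_eq_natCast,
      EReal.div_le_iff_le_mul (by exact_mod_cast hm) (EReal.natCast_ne_top m)]
    exact hf.natCast_mul_log_sub_log_two_le hs hm
  refine le_of_tendsto (EReal.tendsto_coe.2 ?_) (eventually_atTop.2 ⟨1, h⟩)
  simpa using tendsto_const_nhds.sub (tendsto_const_div_atTop_nhds_zero_nat (Real.log 2))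

theorem coverEntropy_le (hf : ConstSlopeLaps f s k t) (hs : 1 ≤ |s|) :
    coverEntropy f (Icc 0 1) ≤ Real.log |s| := by
  have hs' : 1 ≤ ‖s‖₊ := by
    rwa [← NNReal.coe_le_coe, coe_nnnorm, Real.norm_eq_abs, NNReal.coe_one]
  simpa using coverEntropy_Icc_le_log hf.mapsTo hf.lipschitzOnWith hs'

end ConstSlopeLaps

theorem coverEntropy_piecewiseLinear_constSlope_general (f : ℝ → ℝ) (s : ℝ) (hs : 1 < s)
    (k : ℕ) (hk : 1 ≤ k) (t : ℕ → ℝ) (ht0 : t 0 = 0) (htk : t k = 1)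
    (htmono : ∀ i < k, t i < t (i + 1))
    (hmaps : Set.MapsTo f (Set.Icc 0 1) (Set.Icc 0 1))
    (haff : ∀ i < k, ∃ m q : ℝ, (m = s ∨ m = -s) ∧
      ∀ x ∈ Set.Icc (t i) (t (i + 1)), f x = m * x + q) :
    Dynamics.coverEntropy f (Set.Icc 0 1) = (Real.log s : EReal) := by
  have hf : ConstSlopeLaps f s k t := ⟨hk, ht0, htk, htmono, hmaps, haff⟩
  rw [← Real.log_abs]
  exact le_antisymm (hf.coverEntropy_le (hs.le.trans (le_abs_self s)))
    (hf.log_le_coverEntropy (by positivity))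

/-- A continuous piecewise linear selfmap of `[0,1]` with constant absolute slope
`s > 1` on each of its finitely many laps has topological entropy `log s`. -/
theorem coverEntropy_piecewiseLinear_constSlope (f : ℝ → ℝ) (s : ℝ) (hs : 1 < s)
    (k : ℕ) (hk : 1 ≤ k) (t : ℕ → ℝ) (ht0 : t 0 = 0) (htk : t k = 1)
    (htmono : ∀ i < k, t i < t (i + 1))
    (hcont : ContinuousOn f (Set.Icc 0 1))
    (hmaps : Set.MapsTo f (Set.Icc 0 1) (Set.Icc 0 1))
    (haff : ∀ i < k, ∃ m q : ℝ, (m = s ∨ m = -s) ∧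
      ∀ x ∈ Set.Icc (t i) (t (i + 1)), f x = m * x + q) :
    Dynamics.coverEntropy f (Set.Icc 0 1) = (Real.log s : EReal) :=
  coverEntropy_piecewiseLinear_constSlope_general f s hs k hk t ht0 htk htmono hmaps haff
end
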